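/- arXiv:cs/0504082 — 4 statements merged into one kernel-verified Lean document; each statement's English description precedes it below -/
import Mathlib

section
/- Let G be a finite simple graph and let {x,y} be an even pair in G. Then the chromatic number of G/xy equals the chromatic number of G, and the maximum clique size of G/xy equals the maximum clique size of G. -/
open SimpleGraph

/-- The graph `G/ab` obtained from `G` by contracting the two (non-adjacent) vertices
`a` and `b` : vertex `b` is removed and `a` plays the role of the new contracted vertex,
adjacent to every vertex that was adjacent to `a` or to `b`. -/
def contract {V : Type} (G : SimpleGraph V) (a b : V) : SimpleGraph {z : V // z ≠ b} where
  Adj u v := u ≠ v ∧ (G.Adj u.1 v.1 ∨ (u.1 = a ∧ G.Adj b v.1) ∨ (v.1 = a ∧ G.Adj u.1 b))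
  symm := by
    constructor
    rintro u v ⟨h1, h2⟩
    refine ⟨h1.symm, ?_⟩
    rcases h2 with h | ⟨h, h'⟩ | ⟨h, h'⟩
    · exact Or.inl h.symm
    · exact Or.inr (Or.inr ⟨h, h'.symm⟩)
    · exact Or.inr (Or.inl ⟨h, h'.symm⟩)
  loopless := by constructor; rintro u ⟨h1, -⟩; exact h1 rfl

/-- A walk is chordless if it is a (simple) path and the only edges of `G` between
vertices of the walk are the edges of the walk, i.e. it is an induced path. -/
def IsChordless {V : Type} (G : SimpleGraph V) {x y : V} (p : G.Walk x y) : Prop :=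
  p.IsPath ∧ ∀ u v, u ∈ p.support → v ∈ p.support → G.Adj u v → p.toSubgraph.Adj u v

/-- `{x, y}` is an even pair: `x ≠ y`, non-adjacent, and every chordless path from
`x` to `y` has even length. -/
def IsEvenPair {V : Type} (G : SimpleGraph V) (x y : V) : Prop :=
  x ≠ y ∧ ¬ G.Adj x y ∧ ∀ p : G.Walk x y, IsChordless G p → Even p.length

/-- A hole: a chordless cycle with at least four vertices (the only edges of `G`
between vertices of the cycle are the cycle edges). -/
def IsHole {V : Type} (G : SimpleGraph V) {v : V} (p : G.Walk v v) : Prop :=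
  p.IsCycle ∧ 4 ≤ p.length ∧
    ∀ u w, u ∈ p.support → w ∈ p.support → G.Adj u w → p.toSubgraph.Adj u w

/-- The set `S` induces a prism in `G`: two vertex-disjoint triangles
`a₁a₂a₃` and `b₁b₂b₃` joined by three vertex-disjoint paths `Pᵢ` from `aᵢ` to `bᵢ`,
with no other edges than those of the triangles and of the paths. -/
def IsPrismOn {V : Type} (G : SimpleGraph V) (S : Set V) : Prop :=
  ∃ (a₁ a₂ a₃ b₁ b₂ b₃ : V) (P₁ : G.Walk a₁ b₁) (P₂ : G.Walk a₂ b₂) (P₃ : G.Walk a₃ b₃),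
    P₁.IsPath ∧ P₂.IsPath ∧ P₃.IsPath ∧
    a₁ ≠ b₁ ∧ a₂ ≠ b₂ ∧ a₃ ≠ b₃ ∧
    (∀ u ∈ P₁.support, ∀ v ∈ P₂.support, u ≠ v) ∧
    (∀ u ∈ P₁.support, ∀ v ∈ P₃.support, u ≠ v) ∧
    (∀ u ∈ P₂.support, ∀ v ∈ P₃.support, u ≠ v) ∧
    S = {v | v ∈ P₁.support ∨ v ∈ P₂.support ∨ v ∈ P₃.support} ∧
    ∀ u ∈ S, ∀ v ∈ S, (G.Adj u v ↔
      (P₁.toSubgraph.Adj u v ∨ P₂.toSubgraph.Adj u v ∨ P₃.toSubgraph.Adj u v ∨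
        s(u, v) ∈ ({s(a₁, a₂), s(a₁, a₃), s(a₂, a₃),
                    s(b₁, b₂), s(b₁, b₃), s(b₂, b₃)} : Set (Sym2 V))))

/-- The class 𝒜 ("Artemis graphs"): no odd hole, no antihole of length at least 5,
and no prism, all as induced subgraphs. -/
def InArtemis {V : Type} (G : SimpleGraph V) : Prop :=
  (∀ (v : V) (p : G.Walk v v), IsHole G p → ¬ Odd p.length) ∧
  (∀ (v : V) (p : Gᶜ.Walk v v), IsHole Gᶜ p → ¬ 5 ≤ p.length) ∧
  ¬ ∃ S : Set V, IsPrismOn G S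

/-- A special even pair: an even pair whose contraction yields a graph with no prism. -/
def IsSpecialEvenPair {V : Type} (G : SimpleGraph V) (a b : V) : Prop :=
  IsEvenPair G a b ∧ ¬ ∃ S, IsPrismOn (contract G a b) S

/-- `C(T)`: the set of vertices outside `T` adjacent to every vertex of `T`. -/
def Cset {V : Type} (G : SimpleGraph V) (T : Set V) : Set V :=
  {v | v ∉ T ∧ ∀ t ∈ T, G.Adj v t}

/-- `N(X)`: the set of vertices outside `X` adjacent to at least one vertex of `X`. -/
def Nset {V : Type} (G : SimpleGraph V) (X : Set V) : Set V :=
  {v | v ∉ X ∧ ∃ x ∈ X, G.Adj v x}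

/-- `T` is interesting: `T` is non-empty, induces a connected subgraph of the
complement of `G`, and `C(T)` is not a clique of `G`. -/
def IsInteresting {V : Type} (G : SimpleGraph V) (T : Set V) : Prop :=
  T.Nonempty ∧ (Gᶜ.induce T).Connected ∧ ¬ G.IsClique (Cset G T)

/-- A maximal interesting set: interesting and not strictly contained in another
interesting set. -/
def IsMaximalInteresting {V : Type} (G : SimpleGraph V) (T : Set V) : Prop :=
  IsInteresting G T ∧ ∀ T', IsInteresting G T' → T ⊆ T' → T' = T

/-- A `T`-outer path: a chordless path whose two endvertices are in `C(T)` and whose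
interior vertices all lie outside `T ∪ C(T)`. -/
def IsOuterPath {V : Type} (G : SimpleGraph V) (T : Set V) {x y : V} (p : G.Walk x y) : Prop :=
  x ≠ y ∧ IsChordless G p ∧ x ∈ Cset G T ∧ y ∈ Cset G T ∧
  ∀ v ∈ p.support, v ≠ x → v ≠ y → v ∉ T ∪ Cset G T

/-- The set of interior vertices of a walk from `x` to `y`. -/
def walkInterior {V : Type} {G : SimpleGraph V} {x y : V} (p : G.Walk x y) : Set V :=
  {v | v ∈ p.support ∧ v ≠ x ∧ v ≠ y}

/-- A minimal `T`-outer path: no `T`-outer path has its interior strictly contained in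
the interior of `p`. -/
def IsMinimalOuterPath {V : Type} (G : SimpleGraph V) (T : Set V) {x y : V}
    (p : G.Walk x y) : Prop :=
  IsOuterPath G T p ∧
  ¬ ∃ (x' y' : V) (q : G.Walk x' y'), IsOuterPath G T q ∧ walkInterior q ⊂ walkInterior p

/-- For a minimal `T`-outer path `p = α z₁ ⋯ z_q β` (so `zᵢ = p.getVert i` for
`1 ≤ i ≤ p.length - 1`), the set `A` of vertices of `C(T)` adjacent to `z₁` and to none
of `z₂, …, z_q`. -/
def setA {V : Type} (G : SimpleGraph V) (T : Set V) {x y : V} (p : G.Walk x y) : Set V :=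
  {v | v ∈ Cset G T ∧ G.Adj v (p.getVert 1) ∧
    ∀ i, 2 ≤ i → i ≤ p.length - 1 → ¬ G.Adj v (p.getVert i)}

/-- The set `B` of vertices of `C(T)` adjacent to `z_q` and to none of `z₁, …, z_{q-1}`. -/
def setB {V : Type} (G : SimpleGraph V) (T : Set V) {x y : V} (p : G.Walk x y) : Set V :=
  {v | v ∈ Cset G T ∧ G.Adj v (p.getVert (p.length - 1)) ∧
    ∀ i, 1 ≤ i → i ≤ p.length - 2 → ¬ G.Adj v (p.getVert i)}

/-- `u <_A u'` : both in `A` and there is an odd chordless path from `u` to a vertex of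
`B` whose second vertex is `u'`. -/
def ltA {V : Type} (G : SimpleGraph V) (T : Set V) {x y : V} (p : G.Walk x y)
    (u u' : V) : Prop :=
  u ∈ setA G T p ∧ u' ∈ setA G T p ∧
  ∃ b ∈ setB G T p, ∃ q : G.Walk u b, IsChordless G q ∧ Odd q.length ∧ q.getVert 1 = u'

/-- `v <_B v'` : both in `B` and there is an odd chordless path from `v` to a vertex of
`A` whose second vertex is `v'`. -/
def ltB {V : Type} (G : SimpleGraph V) (T : Set V) {x y : V} (p : G.Walk x y)
    (v v' : V) : Prop :=
  v ∈ setB G T p ∧ v' ∈ setB G T p ∧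
  ∃ a ∈ setA G T p, ∃ q : G.Walk v a, IsChordless G q ∧ Odd q.length ∧ q.getVert 1 = v'

/-- `J` is a co-handle of `H`: `J` is a connected component of `G ∖ N(H)`, distinct
from `H`, with `N(J) = N(H)`. -/
def IsCohandleOf {V : Type} (G : SimpleGraph V) (J H : Set V) : Prop :=
  (∃ c : (G.induce (Nset G H)ᶜ).ConnectedComponent, Subtype.val '' c.supp = J) ∧
  J ≠ H ∧ Nset G J = Nset G H

/-- `H` is a handle of `G`. -/
def IsHandle {V : Type} (G : SimpleGraph V) (H : Set V) : Prop :=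
  2 ≤ H.ncard ∧ (G.induce H).Connected ∧ (∃ J, IsCohandleOf G J H) ∧
  ∀ v ∈ Nset G H, ∀ x y, x ∈ H → y ∈ H → G.Adj x y → (G.Adj v x ∨ G.Adj v y)

/-- `H` is a generalized handle of `G`: `H` contains at least one edge (but need not be
connected), some component `J ≠ H` of `G ∖ N(H)` satisfies `N(J) = N(H)`, and every
vertex of `N(H)` sees at least one endpoint of every edge of `G[H]`. -/
def IsGenHandle {V : Type} (G : SimpleGraph V) (H : Set V) : Prop :=
  (∃ x ∈ H, ∃ y ∈ H, G.Adj x y) ∧ (∃ J, IsCohandleOf G J H) ∧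
  ∀ v ∈ Nset G H, ∀ x y, x ∈ H → y ∈ H → G.Adj x y → (G.Adj v x ∨ G.Adj v y)

/-- A graph is even-contractile if it can be turned into a clique by a sequence of
contractions of even pairs. -/
inductive EvenContractile : {V : Type} → SimpleGraph V → Prop where
  | of_clique {V : Type} (G : SimpleGraph V) (h : G.IsClique Set.univ) : EvenContractile G
  | of_contract {V : Type} (G : SimpleGraph V) (a b : V) (h : IsEvenPair G a b)
      (hc : EvenContractile (contract G a b)) : EvenContractile G

section Helpers

open SimpleGraph Walk

variable {V : Type}

/-- The walk consisting of the first `n` darts of `p`. -/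
def wtake {G : SimpleGraph V} : {u v : V} → (p : G.Walk u v) → (n : ℕ) → G.Walk u (p.getVert n)
  | _, _, p, 0 => Walk.nil.copy rfl (p.getVert_zero).symm
  | _, _, Walk.nil, _ + 1 =>
    Walk.nil.copy rfl (Walk.getVert_of_length_le _ (by simp)).symm
  | _, _, Walk.cons h q, n + 1 =>
    (Walk.cons h (wtake q n)).copy rfl (Walk.getVert_cons_succ q h).symm

lemma wtake_length {G : SimpleGraph V} {u v : V} (p : G.Walk u v) (n : ℕ) :
    (wtake p n).length = min n p.length := by
  induction p generalizing n with
  | nil =>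
    cases n <;> simp [wtake]
  | cons h q ih =>
    cases n with
    | zero => simp [wtake]
    | succ n => simp [wtake, ih]

lemma drop_length {G : SimpleGraph V} {u v : V} (p : G.Walk u v) (n : ℕ) :
    (p.drop n).length = p.length - n := by
  induction p generalizing n with
  | nil => simp [Walk.drop]
  | cons h q ih =>
    cases n with
    | zero => simp [Walk.drop]
    | succ n => simp [Walk.drop, ih]

lemma transfer_toSubgraph_adj {G H : SimpleGraph V} {u v : V} (p : G.Walk u v)
    (hp : ∀ e ∈ p.edges, e ∈ H.edgeSet) {a b : V} :
    (p.transfer H hp).toSubgraph.Adj a b ↔ p.toSubgraph.Adj a b := by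
  induction p with
  | nil => simp [Walk.transfer, Walk.toSubgraph, SimpleGraph.singletonSubgraph]
  | cons h q ih =>
    simp [Walk.transfer, Walk.toSubgraph, ih]
    change s(_, _) = s(a, b) ∨ _ ↔ _
    simp

/-- There is a chordless (induced) path between any two reachable vertices. -/
lemma exists_chordless_path (H : SimpleGraph V) {x y : V} (hr : H.Reachable x y) :
    ∃ p : H.Walk x y, p.IsPath ∧
      ∀ u v, u ∈ p.support → v ∈ p.support → H.Adj u v → p.toSubgraph.Adj u v := by
  classical
  set S : Set ℕ := {n | ∃ p : H.Walk x y, p.IsPath ∧ p.length = n} with hS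
  have hne : S.Nonempty := by
    obtain ⟨w⟩ := hr
    exact ⟨w.bypass.length, w.bypass, w.bypass_isPath, rfl⟩
  obtain ⟨p, hp, hlen⟩ := Nat.sInf_mem hne
  refine ⟨p, hp, ?_⟩
  have key : ∀ i j, i < j → j ≤ p.length → H.Adj (p.getVert i) (p.getVert j) →
      p.toSubgraph.Adj (p.getVert i) (p.getVert j) := by
    intro i j hij hjle hadj
    rcases eq_or_lt_of_le (Nat.succ_le_of_lt hij) with hj | hj
    · rw [← hj]
      exact Walk.toSubgraph_adj_getVert p (by omega)
    · exfalso
      set w : H.Walk x y := (wtake p i).append (Walk.cons hadj (p.drop j)) with hw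
      have hwl : w.length < p.length := by
        rw [hw, Walk.length_append, Walk.length_cons, wtake_length, _root_.drop_length]
        omega
      have hmem : w.bypass.length ∈ S := ⟨w.bypass, w.bypass_isPath, rfl⟩
      have := Nat.sInf_le hmem
      have := w.length_bypass_le
      omega
  intro u v hu hv hadj
  rw [Walk.mem_support_iff_exists_getVert] at hu hv
  obtain ⟨i, hi, hile⟩ := hu
  obtain ⟨j, hj, hjle⟩ := hv
  rcases lt_trichotomy i j with hlt | heq | hlt
  · rw [← hi, ← hj]; rw [← hi, ← hj] at hadj; exact key i j hlt hjle hadj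
  · exfalso; rw [← hi, ← hj, heq] at hadj; exact H.irrefl hadj
  · rw [← hi, ← hj]; rw [← hi, ← hj] at hadj
    exact (key j i hlt hile hadj.symm).symm

/-- Parity of walks in a graph whose every edge joins the two colors `c1`, `c2`. -/
lemma walk_parity {H : SimpleGraph V} {α : Type} (f : V → α) (c1 c2 : α) (hne : c1 ≠ c2)
    (hadj : ∀ a b, H.Adj a b → (f a = c1 ∧ f b = c2) ∨ (f a = c2 ∧ f b = c1)) :
    ∀ {u v : V} (p : H.Walk u v), (f v = c1 ∨ f v = c2) → (Even p.length ↔ f u = f v) := by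
  intro u v p
  induction p with
  | nil => intro _; simp
  | @cons u w v h q ih =>
    intro hv
    have h1 := hadj _ _ h
    have h2 := ih hv
    simp only [Walk.length_cons, Nat.even_add_one, h2]
    rcases h1 with ⟨ha, hb⟩ | ⟨ha, hb⟩ <;> rcases hv with hv | hv <;>
      rw [ha, hb, hv] <;> simp [hne, Ne.symm hne]

end Helpers

/-- If `{x, y}` is an even pair in a finite simple graph `G`, then the chromatic number
of `G/xy` equals the chromatic number of `G` and the clique number of `G/xy` equals the
clique number of `G`. -/
theorem even_pair_contraction_chromaticNumber_cliqueNum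
    {V : Type} [Fintype V] [DecidableEq V] (G : SimpleGraph V) (x y : V)
    (h : IsEvenPair G x y) :
    (contract G x y).chromaticNumber = G.chromaticNumber ∧
    (contract G x y).cliqueNum = G.cliqueNum := by
  classical
  obtain ⟨hxy, hnadj, heven⟩ := h
  -- ### Coloring transfer, easy direction
  have dir1 : ∀ n, (contract G x y).Colorable n → G.Colorable n := by
    rintro n ⟨C⟩
    refine ⟨SimpleGraph.Coloring.mk (fun v => if hv : v = y then C ⟨x, hxy⟩ else C ⟨v, hv⟩) ?_⟩
    intro a b hab
    have hne : a ≠ b := hab.ne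
    by_cases hay : a = y <;> by_cases hby : b = y
    · exact absurd (hay.trans hby.symm) hne
    · subst hay
      have hbx : b ≠ x := by rintro rfl; exact hnadj hab.symm
      simp only [dif_pos rfl, dif_neg hby]
      exact C.valid ⟨by simp [Subtype.ext_iff, Ne.symm hbx], Or.inr (Or.inl ⟨rfl, hab⟩)⟩
    · subst hby
      have hax : a ≠ x := by rintro rfl; exact hnadj hab
      simp only [dif_pos rfl, dif_neg hay]
      exact (C.valid ⟨by simp [Subtype.ext_iff, Ne.symm hax], Or.inr (Or.inl ⟨rfl, hab.symm⟩)⟩).symm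
    · simp only [dif_neg hay, dif_neg hby]
      exact C.valid ⟨by simp [Subtype.ext_iff, hne], Or.inl hab⟩
  -- ### Coloring transfer, hard direction (uses the even pair property)
  have dir2 : ∀ n, G.Colorable n → (contract G x y).Colorable n := by
    rintro n ⟨c⟩
    suffices h' : ∃ c' : V → Fin n, (∀ a b, G.Adj a b → c' a ≠ c' b) ∧ c' x = c' y by
      obtain ⟨c', hc', hcxy⟩ := h'
      refine ⟨SimpleGraph.Coloring.mk (fun v => c' v.1) ?_⟩
      rintro u v ⟨hne, hadj | ⟨hu, hadj⟩ | ⟨hv, hadj⟩⟩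
      · exact hc' _ _ hadj
      · show c' u.1 ≠ c' v.1
        rw [hu, hcxy]; exact hc' _ _ hadj
      · show c' u.1 ≠ c' v.1
        rw [hv, hcxy]; exact hc' _ _ hadj
    by_cases hcc : c x = c y
    · exact ⟨c, fun a b hab => c.valid hab, hcc⟩
    · -- the bipartite subgraph on the two color classes of x and y
      set H : SimpleGraph V :=
        { Adj := fun a b => G.Adj a b ∧
            ((c a = c x ∧ c b = c y) ∨ (c a = c y ∧ c b = c x))
          symm := by constructor; rintro a b ⟨h1, h2 | h2⟩
                     exacts [⟨h1.symm, Or.inr ⟨h2.2, h2.1⟩⟩, ⟨h1.symm, Or.inl ⟨h2.2, h2.1⟩⟩]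
          loopless := ⟨fun a ha => G.irrefl ha.1⟩ } with hH
      have hHadj : ∀ a b, H.Adj a b ↔ (G.Adj a b ∧
          ((c a = c x ∧ c b = c y) ∨ (c a = c y ∧ c b = c x))) := fun a b => Iff.rfl
      -- x and y are not linked in H
      have hnr : ¬ H.Reachable x y := by
        intro hr
        obtain ⟨p, hpath, hchord⟩ := exists_chordless_path H hr
        -- every vertex on p is colored c x or c y
        have hsup : ∀ {u v : V} (q : H.Walk u v), (c u = c x ∨ c u = c y) →
            ∀ w ∈ q.support, (c w = c x ∨ c w = c y) := by
          intro u v q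
          induction q with
          | nil => intro hu w hw; simp only [SimpleGraph.Walk.support_nil,
              List.mem_singleton] at hw; rwa [hw]
          | cons hq q ih =>
            intro hu w hw
            simp only [SimpleGraph.Walk.support_cons, List.mem_cons] at hw
            rcases hw with rfl | hw
            · exact hu
            · refine ih ?_ w hw
              rcases hq.2 with ⟨_, h2⟩ | ⟨_, h2⟩
              · exact Or.inr h2
              · exact Or.inl h2
        have hsupp := hsup p (Or.inl rfl)
        have hedges : ∀ e ∈ p.edges, e ∈ G.edgeSet := by
          intro e he
          induction e with
          | h a b =>
            exact (SimpleGraph.Walk.edges_subset_edgeSet p he : H.Adj a b).1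
        set q := p.transfer G hedges with hq
        have hchordq : IsChordless G q := by
          refine ⟨hpath.transfer _, ?_⟩
          intro u v hu hv hadj
          rw [hq, SimpleGraph.Walk.support_transfer] at hu hv
          rw [hq, transfer_toSubgraph_adj]
          refine hchord u v hu hv ⟨hadj, ?_⟩
          have hcu := hsupp u hu
          have hcv := hsupp v hv
          have hnecc := c.valid hadj
          rcases hcu with hcu | hcu <;> rcases hcv with hcv | hcv
          · exact absurd (hcu.trans hcv.symm) hnecc
          · exact Or.inl ⟨hcu, hcv⟩
          · exact Or.inr ⟨hcu, hcv⟩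
          · exact absurd (hcu.trans hcv.symm) hnecc
        have hev : Even q.length := heven q hchordq
        have hpar := walk_parity (H := H) c (c x) (c y) hcc
          (fun a b hab => hab.2) p (Or.inr rfl)
        rw [hq, SimpleGraph.Walk.length_transfer] at hev
        exact hcc (hpar.mp hev)
      -- swap the two colors on the H-component of x
      set c' : V → Fin n := fun v =>
        if H.Reachable x v then Equiv.swap (c x) (c y) (c v) else c v with hc'
      have hx' : c' x = c y := by
        simp only [hc', if_pos (SimpleGraph.Reachable.refl x), Equiv.swap_apply_left]
      have hy' : c' y = c y := by simp only [hc', if_neg hnr]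
      refine ⟨c', ?_, hx'.trans hy'.symm⟩
      intro a b hab
      have hne := c.valid hab
      by_cases ha : H.Reachable x a <;> by_cases hb : H.Reachable x b
      · simp only [hc', if_pos ha, if_pos hb]
        exact fun e => hne ((Equiv.swap (c x) (c y)).injective e)
      · simp only [hc', if_pos ha, if_neg hb]
        intro e
        by_cases h1 : c a = c x
        · rw [h1, Equiv.swap_apply_left] at e
          exact hb (ha.trans (SimpleGraph.Adj.reachable
            (show H.Adj a b from ⟨hab, Or.inl ⟨h1, e.symm⟩⟩)))
        by_cases h2 : c a = c y
        · rw [h2, Equiv.swap_apply_right] at e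
          exact hb (ha.trans (SimpleGraph.Adj.reachable
            (show H.Adj a b from ⟨hab, Or.inr ⟨h2, e.symm⟩⟩)))
        · rw [Equiv.swap_apply_of_ne_of_ne h1 h2] at e; exact hne e
      · simp only [hc', if_neg ha, if_pos hb]
        intro e
        by_cases h1 : c b = c x
        · rw [h1, Equiv.swap_apply_left] at e
          exact ha (hb.trans (SimpleGraph.Adj.reachable
            (show H.Adj b a from ⟨hab.symm, Or.inl ⟨h1, e⟩⟩)))
        by_cases h2 : c b = c y
        · rw [h2, Equiv.swap_apply_right] at e
          exact ha (hb.trans (SimpleGraph.Adj.reachable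
            (show H.Adj b a from ⟨hab.symm, Or.inr ⟨h2, e⟩⟩)))
        · rw [Equiv.swap_apply_of_ne_of_ne h1 h2] at e; exact hne e
      · simp only [hc', if_neg ha, if_neg hb]; exact hne
  -- ### Clique transfer, both directions
  have cl1 : ∀ n, (∃ s, G.IsNClique n s) → ∃ s, (contract G x y).IsNClique n s := by
    rintro n ⟨s, hs⟩
    obtain ⟨hscl, hscard⟩ := (SimpleGraph.isNClique_iff _).mp hs
    set f : V → {z : V // z ≠ y} := fun v => if hv : v = y then ⟨x, hxy⟩ else ⟨v, hv⟩ with hf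
    have hxs : y ∈ s → x ∉ s := by
      intro hy hx
      exact hnadj (hscl hx hy hxy)
    have hinj : Set.InjOn f s := by
      intro a ha b hb hfab
      by_cases hay : a = y <;> by_cases hby : b = y
      · rw [hay, hby]
      · exfalso
        rw [hf] at hfab
        simp only [dif_pos hay, dif_neg hby, Subtype.mk.injEq] at hfab
        rw [hay] at ha; exact hxs ha (hfab ▸ hb)
      · exfalso
        rw [hf] at hfab
        simp only [dif_neg hay, dif_pos hby, Subtype.mk.injEq] at hfab
        rw [hby] at hb; exact hxs hb (hfab ▸ ha)
      · rw [hf] at hfab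
        simp only [dif_neg hay, dif_neg hby, Subtype.mk.injEq] at hfab
        exact hfab
    refine ⟨s.image f, (SimpleGraph.isNClique_iff _).mpr ⟨?_, ?_⟩⟩
    · intro u hu v hv huv
      simp only [Finset.coe_image, Set.mem_image, Finset.mem_coe] at hu hv
      obtain ⟨a, ha, rfl⟩ := hu
      obtain ⟨b, hb, rfl⟩ := hv
      have hab : a ≠ b := fun e => huv (by rw [e])
      have hGab : G.Adj a b := hscl ha hb hab
      refine ⟨huv, ?_⟩
      by_cases hay : a = y <;> by_cases hby : b = y
      · exact absurd (hay.trans hby.symm) hab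
      · subst hay
        simp only [hf, dif_pos rfl, dif_neg hby]
        exact Or.inr (Or.inl ⟨trivial, hGab⟩)
      · subst hby
        simp only [hf, dif_neg hay, dif_pos rfl]
        exact Or.inr (Or.inr ⟨trivial, hGab⟩)
      · simp only [hf, dif_neg hay, dif_neg hby]
        exact Or.inl hGab
    · rw [Finset.card_image_of_injOn hinj, hscard]
  have cl2 : ∀ n, (∃ s, (contract G x y).IsNClique n s) → ∃ s, G.IsNClique n s := by
    rintro n ⟨s, hs⟩
    obtain ⟨hscl, hscard⟩ := (SimpleGraph.isNClique_iff _).mp hs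
    set a₀ : {z : V // z ≠ y} := ⟨x, hxy⟩ with ha₀
    have hval : ∀ u : {z : V // z ≠ y}, u.1 = x → u = a₀ := fun u hu => Subtype.ext hu
    by_cases hxin : a₀ ∈ s
    · -- the contracted vertex is in the clique
      set s' := s.erase a₀ with hs'
      have hD : ∀ u ∈ s', G.Adj x u.1 ∨ G.Adj y u.1 := by
        intro u hu
        have hune : u ≠ a₀ := Finset.ne_of_mem_erase hu
        have hus : u ∈ s := Finset.mem_of_mem_erase hu
        have hadj := hscl hxin hus (Ne.symm hune)
        rcases hadj.2 with h1 | ⟨_, h1⟩ | ⟨h1, _⟩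
        · exact Or.inl h1
        · exact Or.inr h1
        · exact absurd (hval u h1) hune
      have hclaim : (∀ u ∈ s', G.Adj x u.1) ∨ (∀ u ∈ s', G.Adj y u.1) := by
        by_contra hcon
        push_neg at hcon
        obtain ⟨⟨u, hu, hux⟩, ⟨v, hv, hvy⟩⟩ := hcon
        have huy : G.Adj y u.1 := (hD u hu).resolve_left hux
        have hvx : G.Adj x v.1 := (hD v hv).resolve_right hvy
        have huv : u ≠ v := by rintro rfl; exact hux hvx
        have hu1 : u.1 ≠ x := fun e => (Finset.ne_of_mem_erase hu) (hval u e)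
        have hv1 : v.1 ≠ x := fun e => (Finset.ne_of_mem_erase hv) (hval v e)
        have hGuv : G.Adj v.1 u.1 := by
          have := (hscl (Finset.mem_of_mem_erase hv) (Finset.mem_of_mem_erase hu) huv.symm)
          rcases this.2 with h1 | ⟨h1, _⟩ | ⟨h1, _⟩
          · exact h1
          · exact absurd h1 hv1
          · exact absurd h1 hu1
        -- the odd chordless path x - v - u - y
        set p : G.Walk x y :=
          SimpleGraph.Walk.cons hvx (SimpleGraph.Walk.cons hGuv
            (SimpleGraph.Walk.cons (huy.symm : G.Adj u.1 y) SimpleGraph.Walk.nil)) with hp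
        have hxv : x ≠ v.1 := hvx.ne
        have hxu : x ≠ u.1 := Ne.symm hu1
        have hvu : v.1 ≠ u.1 := hGuv.ne
        have hchordp : IsChordless G p := by
          constructor
          · rw [SimpleGraph.Walk.isPath_def, hp]
            simp only [SimpleGraph.Walk.support_cons, SimpleGraph.Walk.support_nil]
            simp [List.nodup_cons, hxv, hxu, hxy, hvu, v.2, u.2]
          · intro a b haa hbb hadj
            have hsupp : p.support = [x, v.1, u.1, y] := by simp [hp]
            rw [hsupp] at haa hbb
            have htri : ∀ z w : V, s(z, w) = s(z, w) := fun _ _ => rfl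
            simp only [List.mem_cons, List.not_mem_nil, or_false] at haa hbb
            have hsub : ∀ z w, p.toSubgraph.Adj z w ↔
                (s(z,w) = s(x, v.1) ∨ s(z,w) = s(v.1, u.1) ∨ s(z,w) = s(u.1, y)) := by
              intro z w
              rw [hp]
              simp only [SimpleGraph.Walk.toSubgraph, SimpleGraph.Subgraph.sup_adj,
                SimpleGraph.subgraphOfAdj_adj, SimpleGraph.singletonSubgraph_adj, Pi.bot_apply]
              constructor
              · rintro (h1 | h1 | h1 | h1)
                · exact Or.inl h1.symm
                · exact Or.inr (Or.inl h1.symm)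
                · exact Or.inr (Or.inr h1.symm)
                · exact absurd h1 (by simp)
              · rintro (h1 | h1 | h1)
                · exact Or.inl h1.symm
                · exact Or.inr (Or.inl h1.symm)
                · exact Or.inr (Or.inr (Or.inl h1.symm))
            rw [hsub]
            rcases haa with rfl | rfl | rfl | rfl <;> rcases hbb with rfl | rfl | rfl | rfl
            all_goals first
              | exact absurd hadj (G.irrefl)
              | exact absurd hadj hnadj
              | exact absurd hadj hux
              | exact absurd hadj.symm hux
              | exact absurd hadj hvy
              | exact absurd hadj.symm hvy
              | exact absurd hadj.symm hnadj
              | (simp [Sym2.eq_swap])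
        have := heven p hchordp
        rw [hp] at this
        simp only [SimpleGraph.Walk.length_cons, SimpleGraph.Walk.length_nil] at this
        rcases this with ⟨k, hk⟩
        omega
      have hcards : s'.card = n - 1 := by rw [hs', Finset.card_erase_of_mem hxin, hscard]
      have hn1 : 1 ≤ n := by
        rw [← hscard]; exact Finset.card_pos.mpr ⟨a₀, hxin⟩
      rcases hclaim with hall | hall
      · -- everything adjacent to x : use s.image val (which contains x)
        refine ⟨s.image Subtype.val, (SimpleGraph.isNClique_iff _).mpr ⟨?_, ?_⟩⟩
        · intro a ha b hb hab
          simp only [Finset.coe_image, Set.mem_image, Finset.mem_coe] at ha hb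
          obtain ⟨u, hu, rfl⟩ := ha
          obtain ⟨v, hv, rfl⟩ := hb
          have huv : u ≠ v := fun e => hab (by rw [e])
          by_cases hua : u = a₀ <;> by_cases hva : v = a₀
          · exact absurd (hua.trans hva.symm) huv
          · subst hua
            exact hall v (Finset.mem_erase.mpr ⟨hva, hv⟩)
          · subst hva
            exact (hall u (Finset.mem_erase.mpr ⟨hua, hu⟩)).symm
          · have h1 : u.1 ≠ x := fun e => hua (hval u e)
            have h2 : v.1 ≠ x := fun e => hva (hval v e)
            rcases (hscl hu hv huv).2 with h3 | ⟨h3, _⟩ | ⟨h3, _⟩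
            · exact h3
            · exact absurd h3 h1
            · exact absurd h3 h2
        · rw [Finset.card_image_of_injective _ Subtype.val_injective, hscard]
      · -- everything adjacent to y : use insert y (s'.image val)
        refine ⟨insert y (s'.image Subtype.val), (SimpleGraph.isNClique_iff _).mpr ⟨?_, ?_⟩⟩
        · intro a ha b hb hab
          simp only [Finset.coe_insert, Set.mem_insert_iff, Finset.coe_image,
            Set.mem_image, Finset.mem_coe] at ha hb
          rcases ha with rfl | ⟨u, hu, rfl⟩ <;> rcases hb with rfl | ⟨v, hv, rfl⟩
          · exact absurd rfl hab
          · exact hall v hv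
          · exact (hall u hu).symm
          · have huv : u ≠ v := fun e => hab (by rw [e])
            have h1 : u.1 ≠ x := fun e => (Finset.ne_of_mem_erase hu) (hval u e)
            have h2 : v.1 ≠ x := fun e => (Finset.ne_of_mem_erase hv) (hval v e)
            rcases (hscl (Finset.mem_of_mem_erase hu) (Finset.mem_of_mem_erase hv) huv).2
              with h3 | ⟨h3, _⟩ | ⟨h3, _⟩
            · exact h3
            · exact absurd h3 h1
            · exact absurd h3 h2
        · have hyn : y ∉ s'.image Subtype.val := by
            intro hy
            obtain ⟨u, _, hu2⟩ := Finset.mem_image.mp hy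
            exact u.2 hu2
          rw [Finset.card_insert_of_notMem hyn,
            Finset.card_image_of_injective _ Subtype.val_injective, hcards]
          omega
    · -- the contracted vertex is not in the clique
      refine ⟨s.image Subtype.val, (SimpleGraph.isNClique_iff _).mpr ⟨?_, ?_⟩⟩
      · intro a ha b hb hab
        simp only [Finset.coe_image, Set.mem_image, Finset.mem_coe] at ha hb
        obtain ⟨u, hu, rfl⟩ := ha
        obtain ⟨v, hv, rfl⟩ := hb
        have huv : u ≠ v := fun e => hab (by rw [e])
        have h1 : u.1 ≠ x := fun e => hxin (hval u e ▸ hu)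
        have h2 : v.1 ≠ x := fun e => hxin (hval v e ▸ hv)
        rcases (hscl hu hv huv).2 with h3 | ⟨h3, _⟩ | ⟨h3, _⟩
        · exact h3
        · exact absurd h3 h1
        · exact absurd h3 h2
      · rw [Finset.card_image_of_injective _ Subtype.val_injective, hscard]
  constructor
  · unfold SimpleGraph.chromaticNumber
    have hset : Set.ofPred (contract G x y).Colorable = Set.ofPred G.Colorable :=
      Set.ext fun n => ⟨dir1 n, dir2 n⟩
    rw [hset]
  · unfold SimpleGraph.cliqueNum
    have hset : {n | ∃ s, (contract G x y).IsNClique n s} = {n | ∃ s, G.IsNClique n s} :=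
      Set.ext fun n => ⟨cl2 n, cl1 n⟩
    rw [hset]
end

section
/- If G is a graph in the class 𝒜 and {a,b} is a special even pair of G, then the contracted graph G/ab is in the class 𝒜. -/
open SimpleGraph

section Helpers
open SimpleGraph Walk

variable {V : Type} {H : SimpleGraph V}

lemma toSubgraph_copy' {u v u' v' : V} (p : H.Walk u v) (hu : u = u') (hv : v = v') :
    (p.copy hu hv).toSubgraph = p.toSubgraph := by subst hu hv; rfl

lemma support_tail_eq {u v : V} (p : H.Walk u v) :
    p.support.tail = (List.range p.length).map (fun i => p.getVert (i + 1)) := by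
  induction p with
  | nil => simp
  | cons h q ih =>
    simp only [Walk.support_cons, List.tail_cons, Walk.length_cons, Walk.getVert_cons_succ]
    rw [q.support_eq_cons, ih, List.range_succ_eq_map]
    simp [List.map_map, Function.comp_def]

lemma support_eq_map_range {u v : V} (p : H.Walk u v) :
    p.support = (List.range (p.length + 1)).map (fun i => p.getVert i) := by
  rw [p.support_eq_cons, support_tail_eq, List.range_succ_eq_map]
  simp [List.map_map, Function.comp_def]

/-- getVert is injective on `[0, length)` for cycles. -/
lemma cycle_getVert_inj {v : V} {p : H.Walk v v} (hp : p.IsCycle) :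
    ∀ i j, i < p.length → j < p.length → p.getVert i = p.getVert j → i = j := by
  have htail := support_tail_eq p
  have hnd : p.support.tail.Nodup := hp.support_nodup
  rw [htail] at hnd
  have hinj1 : ∀ i j, i < p.length → j < p.length →
      p.getVert (i + 1) = p.getVert (j + 1) → i = j := by
    intro i j hi hj hij
    have := List.inj_on_of_nodup_map hnd (x := i) (y := j) (by simp [hi]) (by simp [hj]) hij
    exact this
  have hwrap : p.getVert p.length = p.getVert 0 := by simp [Walk.getVert_length]
  have h3 : 3 ≤ p.length := hp.three_le_length
  intro i j hi hj hij
  match i, j with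
  | 0, 0 => rfl
  | 0, j + 1 =>
    exfalso
    have heq : p.getVert (p.length - 1 + 1) = p.getVert (j + 1) := by
      have h' : p.length - 1 + 1 = p.length := by omega
      rw [h', hwrap, hij]
    have := hinj1 (p.length - 1) j (by omega) (by omega) heq
    omega
  | i + 1, 0 =>
    exfalso
    have heq : p.getVert (p.length - 1 + 1) = p.getVert (i + 1) := by
      have h' : p.length - 1 + 1 = p.length := by omega
      rw [h', hwrap, ← hij]
    have := hinj1 (p.length - 1) i (by omega) (by omega) heq
    omega
  | i + 1, j + 1 => exact congrArg (· + 1) (hinj1 i j (by omega) (by omega) hij)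

/-- Build a walk following `f 0, f 1, …, f n`. -/
def mkWalk (H : SimpleGraph V) (f : ℕ → V) :
    (n : ℕ) → (∀ i, i < n → H.Adj (f i) (f (i + 1))) → H.Walk (f 0) (f n)
  | 0, _ => Walk.nil
  | n + 1, h => (mkWalk H f n (fun i hi => h i (by omega))).concat (h n (by omega))

lemma mkWalk_length (f : ℕ → V) (n : ℕ) (h : ∀ i, i < n → H.Adj (f i) (f (i + 1))) :
    (mkWalk H f n h).length = n := by
  induction n with
  | zero => rfl
  | succ n ih => simp only [mkWalk, Walk.length_concat, ih]

lemma mkWalk_support (f : ℕ → V) (n : ℕ) (h : ∀ i, i < n → H.Adj (f i) (f (i + 1))) :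
    (mkWalk H f n h).support = (List.range (n + 1)).map f := by
  induction n with
  | zero => simp [mkWalk, List.range_succ]
  | succ n ih =>
    simp only [mkWalk, Walk.support_concat, ih, List.range_succ (n := n + 1), List.map_append]
    simp [List.concat_eq_append]

lemma walk_getVert_eq_getElem {u v : V} (p : H.Walk u v) {i : ℕ} (hi : i ≤ p.length) :
    p.getVert i = p.support[i]'(by rw [Walk.length_support]; omega) := by
  have h := support_eq_map_range p
  have : p.support[i]'(by rw [Walk.length_support]; omega) =
      ((List.range (p.length + 1)).map (fun j => p.getVert j))[i]'(by simpa using by omega) := by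
    congr 1
  rw [this]
  simp

lemma mkWalk_getVert (f : ℕ → V) (n : ℕ) (h : ∀ i, i < n → H.Adj (f i) (f (i + 1)))
    {i : ℕ} (hi : i ≤ n) : (mkWalk H f n h).getVert i = f i := by
  rw [walk_getVert_eq_getElem _ (by rw [mkWalk_length]; omega)]
  simp only [mkWalk_support]
  simp

lemma mkWalk_edges (f : ℕ → V) (n : ℕ) (h : ∀ i, i < n → H.Adj (f i) (f (i + 1))) :
    (mkWalk H f n h).edges = (List.range n).map (fun i => s(f i, f (i + 1))) := by
  induction n with
  | zero => rfl
  | succ n ih =>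
    simp only [mkWalk, Walk.edges_concat, ih, List.range_succ (n := n), List.map_append]
    simp [List.concat_eq_append]

lemma mkWalk_toSubgraph_adj (f : ℕ → V) (n : ℕ) (h : ∀ i, i < n → H.Adj (f i) (f (i + 1)))
    {i : ℕ} (hi : i < n) :
    (mkWalk H f n h).toSubgraph.Adj (f i) (f (i + 1)) := by
  have := Walk.toSubgraph_adj_getVert (mkWalk H f n h) (i := i) (by rw [mkWalk_length]; omega)
  rwa [mkWalk_getVert f n h (by omega : i ≤ n),
    mkWalk_getVert f n h (by omega : i + 1 ≤ n)] at this

/-- Construct a chordless path from an abstract vertex sequence. -/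
lemma exists_chordless_path_s1 (G : SimpleGraph V) (f : ℕ → V) (n : ℕ)
    (hinj : ∀ i, i ≤ n → ∀ j, j ≤ n → f i = f j → i = j)
    (hadj : ∀ i j, i < j → j ≤ n → (G.Adj (f i) (f j) ↔ j = i + 1)) :
    ∃ q : G.Walk (f 0) (f n), IsChordless G q ∧ q.length = n := by
  have hstep : ∀ i, i < n → G.Adj (f i) (f (i + 1)) := by
    intro i hi
    exact (hadj i (i + 1) (by omega) (by omega)).mpr rfl
  refine ⟨mkWalk G f n hstep, ⟨?_, ?_⟩, mkWalk_length f n hstep⟩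
  · apply Walk.IsPath.mk'
    rw [mkWalk_support]
    refine List.Nodup.map_on ?_ List.nodup_range
    intro i hi j hj hij
    exact hinj i (Nat.lt_succ_iff.mp (List.mem_range.mp hi)) j
      (Nat.lt_succ_iff.mp (List.mem_range.mp hj)) hij
  · intro u w hu hw huw
    rw [mkWalk_support] at hu hw
    obtain ⟨i, hi, rfl⟩ := List.mem_map.mp hu
    obtain ⟨j, hj, rfl⟩ := List.mem_map.mp hw
    rw [List.mem_range] at hi hj
    have hi' : i ≤ n := by omega
    have hj' : j ≤ n := by omega
    rcases lt_trichotomy i j with hlt | heq | hgt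
    · have := (hadj i j hlt hj').mp huw
      subst this
      exact mkWalk_toSubgraph_adj f n hstep (by omega)
    · exact absurd (heq ▸ huw) (G.irrefl)
    · have := (hadj j i hgt hi').mp huw.symm
      subst this
      exact (mkWalk_toSubgraph_adj f n hstep (by omega)).symm

/-- Construct a hole from an abstract cyclic vertex sequence. -/
lemma exists_hole (G : SimpleGraph V) (f : ℕ → V) (n : ℕ) (h4 : 4 ≤ n)
    (hcl : f n = f 0)
    (hinj : ∀ i, i < n → ∀ j, j < n → f i = f j → i = j)
    (hadj : ∀ i j, i < j → j < n →
      (G.Adj (f i) (f j) ↔ (j = i + 1 ∨ (i = 0 ∧ j = n - 1)))) :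
    ∃ (v : V) (p : G.Walk v v), IsHole G p ∧ p.length = n := by
  have hstep : ∀ i, i < n → G.Adj (f i) (f (i + 1)) := by
    intro i hi
    rcases Nat.lt_or_ge (i + 1) n with h | h
    · exact (hadj i (i + 1) (by omega) h).mpr (Or.inl rfl)
    · have hi1 : i = n - 1 := by omega
      have : G.Adj (f 0) (f (n - 1)) := (hadj 0 (n - 1) (by omega) (by omega)).mpr
        (Or.inr ⟨rfl, rfl⟩)
      have h' : i + 1 = n := by omega
      rw [h', hcl, hi1]
      exact this.symm
  set q0 := mkWalk G f n hstep with hq0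
  set q : G.Walk (f 0) (f 0) := q0.copy rfl hcl with hq
  have hqlen : q.length = n := by rw [hq, Walk.length_copy, mkWalk_length]
  have hqsupp : q.support = (List.range (n + 1)).map f := by
    rw [hq, Walk.support_copy, mkWalk_support]
  have hqgv : ∀ i, i ≤ n → q.getVert i = f i := by
    intro i hi
    rw [hq, Walk.getVert_copy, mkWalk_getVert f n hstep hi]
  have hqsub : ∀ i, i < n → q.toSubgraph.Adj (f i) (f (i + 1)) := by
    intro i hi
    rw [hq, toSubgraph_copy']
    exact mkWalk_toSubgraph_adj f n hstep hi
  have hcyc : q.IsCycle := by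
    refine ⟨⟨⟨?_⟩, ?_⟩, ?_⟩
    · rw [hq, Walk.edges_copy, mkWalk_edges]
      refine List.Nodup.map_on ?_ List.nodup_range
      intro i hi j hj hij
      rw [List.mem_range] at hi hj
      rw [Sym2.eq_iff] at hij
      rcases hij with ⟨h1, h2⟩ | ⟨h1, h2⟩
      · exact hinj i hi j hj h1
      · rcases Nat.lt_or_ge (j + 1) n with hj1 | hj1
        · rcases Nat.lt_or_ge (i + 1) n with hi1 | hi1
          · have e1 := hinj i hi (j + 1) hj1 h1
            have e2 := hinj (i + 1) hi1 j hj h2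
            omega
          · have : f (i + 1) = f 0 := by rw [show i + 1 = n by omega, hcl]
            have e2 := hinj j hj 0 (by omega) (h2.symm.trans this)
            have e1 := hinj i hi (j + 1) hj1 h1
            omega
        · have : f (j + 1) = f 0 := by rw [show j + 1 = n by omega, hcl]
          have e1 := hinj i hi 0 (by omega) (h1.trans this)
          rcases Nat.lt_or_ge (i + 1) n with hi1 | hi1
          · have e2 := hinj (i + 1) hi1 j hj h2
            omega
          · omega
    · intro hnil
      rw [hnil] at hqlen
      simp at hqlen
      omega
    · have : q.support.tail = (List.range n).map (fun i => f (i + 1)) := by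
        rw [support_tail_eq, hqlen]
        apply List.map_congr_left
        intro i hi
        exact hqgv (i + 1) (by simpa using List.mem_range.mp hi)
      rw [this]
      refine List.Nodup.map_on ?_ List.nodup_range
      intro i hi j hj hij
      rw [List.mem_range] at hi hj
      rcases Nat.lt_or_ge (i + 1) n with hi1 | hi1
      · rcases Nat.lt_or_ge (j + 1) n with hj1 | hj1
        · exact Nat.succ_injective (hinj _ hi1 _ hj1 hij)
        · have : f (j + 1) = f 0 := by rw [show j + 1 = n by omega, hcl]
          have := hinj _ hi1 0 (by omega) (hij.trans this)
          omega
      · rcases Nat.lt_or_ge (j + 1) n with hj1 | hj1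
        · have : f (i + 1) = f 0 := by rw [show i + 1 = n by omega, hcl]
          have := hinj _ hj1 0 (by omega) (hij.symm.trans this)
          omega
        · omega
  refine ⟨f 0, q, ⟨hcyc, by omega, ?_⟩, hqlen⟩
  intro u w hu hw huw
  rw [hqsupp] at hu hw
  obtain ⟨i, hi, rfl⟩ := List.mem_map.mp hu
  obtain ⟨j, hj, rfl⟩ := List.mem_map.mp hw
  rw [List.mem_range] at hi hj
  -- normalize indices to < n
  have key : ∀ i j : ℕ, i < j → j < n → G.Adj (f i) (f j) → q.toSubgraph.Adj (f i) (f j) := by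
    intro i j hij hjn hadj'
    rcases (hadj i j hij hjn).mp hadj' with rfl | ⟨rfl, rfl⟩
    · exact hqsub i (by omega)
    · have := hqsub (n - 1) (by omega)
      rw [show n - 1 + 1 = n by omega, hcl] at this
      exact this.symm
  have norm : ∀ i : ℕ, i < n + 1 → ∃ i', i' < n ∧ f i = f i' := by
    intro i hi
    rcases Nat.lt_or_ge i n with h | h
    · exact ⟨i, h, rfl⟩
    · exact ⟨0, by omega, by rw [show i = n by omega, hcl]⟩
  obtain ⟨i', hi', hfi⟩ := norm i hi
  obtain ⟨j', hj', hfj⟩ := norm j hj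
  rw [hfi, hfj] at huw ⊢
  rcases lt_trichotomy i' j' with h | h | h
  · exact key i' j' h hj' huw
  · exact absurd (h ▸ huw) (G.irrefl)
  · exact (key j' i' h hi' huw.symm).symm

/-- Extract cyclic structure from a hole. -/
lemma hole_facts {G : SimpleGraph V} {v : V} {p : G.Walk v v} (hp : IsHole G p) :
    (∀ i j, i < p.length → j < p.length → p.getVert i = p.getVert j → i = j) ∧
    (∀ i j, i < j → j < p.length →
      (G.Adj (p.getVert i) (p.getVert j) ↔ (j = i + 1 ∨ (i = 0 ∧ j = p.length - 1)))) := by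
  obtain ⟨hcyc, hlen4, hchord⟩ := hp
  have hinj := cycle_getVert_inj hcyc
  have hwrap : p.getVert p.length = p.getVert 0 := by simp [Walk.getVert_length]
  refine ⟨hinj, ?_⟩
  intro i j hij hj
  constructor
  · intro hadj
    have hmemi : p.getVert i ∈ p.support :=
      Walk.mem_support_iff_exists_getVert.mpr ⟨i, rfl, by omega⟩
    have hmemj : p.getVert j ∈ p.support :=
      Walk.mem_support_iff_exists_getVert.mpr ⟨j, rfl, by omega⟩
    have hsub := hchord _ _ hmemi hmemj hadj
    obtain ⟨k, hk, hkl⟩ := (Walk.toSubgraph_adj_iff _).mp hsub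
    rw [Sym2.eq_iff] at hk
    rcases hk with ⟨h1, h2⟩ | ⟨h1, h2⟩
    · have hki : k = i := hinj k i hkl (by omega) h1
      rcases Nat.lt_or_ge (k + 1) p.length with hk1 | hk1
      · have := hinj (k + 1) j hk1 hj h2
        omega
      · have : p.getVert (k + 1) = p.getVert 0 := by rw [show k + 1 = p.length by omega, hwrap]
        have := hinj j 0 hj (by omega) (h2.symm.trans this)
        omega
    · have hkj : k = j := hinj k j hkl hj h1
      rcases Nat.lt_or_ge (k + 1) p.length with hk1 | hk1
      · have := hinj (k + 1) i hk1 (by omega) h2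
        omega
      · have : p.getVert (k + 1) = p.getVert 0 := by rw [show k + 1 = p.length by omega, hwrap]
        have := hinj i 0 (by omega) (by omega) (h2.symm.trans this)
        omega
  · rintro (rfl | ⟨rfl, rfl⟩)
    · exact p.adj_getVert_succ (by omega)
    · have := p.adj_getVert_succ (i := p.length - 1) (by omega)
      rw [show p.length - 1 + 1 = p.length by omega, hwrap] at this
      exact this.symm

lemma IsHole.rotate' [DecidableEq V] {G : SimpleGraph V} {v u : V} {p : G.Walk v v}
    (hp : IsHole G p) (hu : u ∈ p.support) :
    IsHole G (p.rotate u hu) ∧ (p.rotate u hu).length = p.length := by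
  have hlen : (p.rotate u hu).length = p.length := by
    have h1 := (Walk.support_rotate p u hu).perm.length_eq
    have h2 := Walk.length_support p
    have h3 := Walk.length_support (p.rotate u hu)
    simp only [List.length_tail] at h1
    omega
  have hsup : ∀ x, x ∈ (p.rotate u hu).support ↔ x ∈ p.support := by
    intro x
    have h1 := Walk.verts_toSubgraph (p.rotate u hu)
    rw [Walk.toSubgraph_rotate, Walk.verts_toSubgraph] at h1
    exact (Set.ext_iff.mp h1 x).symm
  refine ⟨⟨hp.1.rotate hu, by rw [hlen]; exact hp.2.1, ?_⟩, hlen⟩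
  · intro x y hx hy hadj
    rw [Walk.toSubgraph_rotate]
    exact hp.2.2 x y ((hsup x).mp hx) ((hsup y).mp hy) hadj

lemma contract_adj_of_ne {G : SimpleGraph V} {a b : V} {u w : {z : V // z ≠ b}}
    (hu : u.1 ≠ a) (hw : w.1 ≠ a) :
    (contract G a b).Adj u w ↔ G.Adj u.1 w.1 := by
  constructor
  · rintro ⟨-, h | ⟨h, -⟩ | ⟨h, -⟩⟩
    · exact h
    · exact absurd h hu
    · exact absurd h hw
  · intro h
    exact ⟨fun he => (G.ne_of_adj h) (by rw [he]), Or.inl h⟩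

lemma contract_adj_c {G : SimpleGraph V} {a b : V} {c u : {z : V // z ≠ b}}
    (hc : c.1 = a) (hu : u ≠ c) :
    (contract G a b).Adj c u ↔ (G.Adj a u.1 ∨ G.Adj b u.1) := by
  have huv : u.1 ≠ a := fun h => hu (Subtype.ext (h.trans hc.symm))
  constructor
  · rintro ⟨-, h | ⟨-, h⟩ | ⟨h, -⟩⟩
    · exact Or.inl (hc ▸ h)
    · exact Or.inr h
    · exact absurd h huv
  · rintro (h | h)
    · exact ⟨fun he => huv (by rw [← he, hc]), Or.inl (by rw [hc]; exact h)⟩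
    · exact ⟨fun he => huv (by rw [← he, hc]), Or.inr (Or.inl ⟨hc, h⟩)⟩

lemma IsChordless_copy {G : SimpleGraph V} {u v u' v' : V} (q : G.Walk u v)
    (hu : u = u') (hv : v = v') :
    IsChordless G (q.copy hu hv) ↔ IsChordless G q := by subst hu hv; rfl

/-- Contracting an even pair creates no odd hole. -/
lemma contract_no_odd_hole {G : SimpleGraph V} {a b : V}
    (hG1 : ∀ (v : V) (p : G.Walk v v), IsHole G p → ¬ Odd p.length)
    (hep : IsEvenPair G a b) :
    ∀ (v : {z : V // z ≠ b}) (p : (contract G a b).Walk v v),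
      IsHole (contract G a b) p → ¬ Odd p.length := by
  classical
  obtain ⟨hne, hnadj, heven⟩ := hep
  set c : {z : V // z ≠ b} := (⟨a, fun h => hne h⟩ : {z : V // z ≠ b}) with hcdef
  have hcval : c.1 = a := rfl
  intro v p hp hodd
  by_cases hcmem : c ∈ p.support
  · -- the hole goes through the contracted vertex
    obtain ⟨hq, hlen'⟩ := IsHole.rotate' hp hcmem
    set q := p.rotate c hcmem with hqdef
    have hodd' : Odd q.length := hlen' ▸ hodd
    obtain ⟨hinj0, hadj0⟩ := hole_facts hq
    set L := q.length with hLdef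
    have hL4 : 4 ≤ L := hq.2.1
    have hL5 : 5 ≤ L := by
      rcases hodd' with ⟨k, hk⟩; omega
    have hgv0 : q.getVert 0 = c := q.getVert_zero
    have hgvL : q.getVert L = c := q.getVert_length
    set y : ℕ → V := fun i => (q.getVert i).1 with hydef
    have hy0 : y 0 = a := by rw [hydef]; simp [hgv0, hcval]
    have hyL : y L = a := by rw [hydef]; simp [hgvL, hcval]
    have hgvinj : ∀ i j, i < L → j < L → y i = y j → i = j := by
      intro i j hi hj hij
      exact hinj0 i j hi hj (Subtype.ext hij)
    have hxnec : ∀ i, 1 ≤ i → i ≤ L - 1 → q.getVert i ≠ c := by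
      intro i h1 h2 h
      have : y i = y 0 := by rw [hydef]; simp [h, hgv0]
      have := hgvinj i 0 (by omega) (by omega) this
      omega
    have hyna : ∀ i, 1 ≤ i → i ≤ L - 1 → y i ≠ a := by
      intro i h1 h2 h
      exact hxnec i h1 h2 (Subtype.ext (h.trans hcval.symm))
    have hynb : ∀ i, y i ≠ b := fun i => (q.getVert i).2
    have hmidadj : ∀ i j, 1 ≤ i → i < j → j ≤ L - 1 →
        (G.Adj (y i) (y j) ↔ j = i + 1) := by
      intro i j h1 h2 h3
      have hbr := contract_adj_of_ne (G := G) (a := a) (b := b)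
        (hyna i h1 (by omega)) (hyna j (by omega) h3)
      rw [hydef]
      refine (hbr.symm).trans ?_
      rw [hadj0 i j h2 (by omega)]
      constructor
      · rintro (h | ⟨h, -⟩)
        · exact h
        · omega
      · exact fun h => Or.inl h
    have hcadj : ∀ j, 1 ≤ j → j ≤ L - 1 →
        ((contract G a b).Adj c (q.getVert j) ↔ (j = 1 ∨ j = L - 1)) := by
      intro j h1 h2
      have := hadj0 0 j (by omega) (by omega)
      rw [hgv0] at this
      rw [this]
      constructor
      · rintro (h | ⟨-, h⟩)
        · exact Or.inl (by omega)
        · exact Or.inr h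
      · rintro (h | h)
        · exact Or.inl (by omega)
        · exact Or.inr ⟨rfl, h⟩
    have hcab : ∀ j, 1 ≤ j → j ≤ L - 1 →
        ((G.Adj a (y j) ∨ G.Adj b (y j)) ↔ (j = 1 ∨ j = L - 1)) := by
      intro j h1 h2
      rw [← hcadj j h1 h2]
      exact (contract_adj_c hcval (hxnec j h1 h2)).symm
    have hc1 : G.Adj a (y 1) ∨ G.Adj b (y 1) :=
      (hcab 1 le_rfl (by omega)).mpr (Or.inl rfl)
    have hcL : G.Adj a (y (L - 1)) ∨ G.Adj b (y (L - 1)) :=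
      (hcab (L - 1) (by omega) le_rfl).mpr (Or.inr rfl)
    have hcm : ∀ j, 2 ≤ j → j ≤ L - 2 → ¬ G.Adj a (y j) ∧ ¬ G.Adj b (y j) := by
      intro j h1 h2
      have := hcab j (by omega) (by omega)
      constructor
      · intro h
        have := this.mp (Or.inl h); omega
      · intro h
        have := this.mp (Or.inr h); omega
    by_cases hA : G.Adj a (y 1) ∧ G.Adj a (y (L - 1))
    · -- replace c by a : odd hole in G
      have hadjiff : ∀ i j, i < j → j < L →
          (G.Adj (y i) (y j) ↔ (j = i + 1 ∨ (i = 0 ∧ j = L - 1))) := by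
        intro i j hij hj
        rcases Nat.eq_zero_or_pos i with rfl | hi1
        · rw [hy0]
          constructor
          · intro h
            by_contra hcon
            push_neg at hcon
            have h2j : 2 ≤ j := by omega
            have hj2 : j ≤ L - 2 := by omega
            exact (hcm j h2j hj2).1 h
          · rintro (h | ⟨-, h⟩)
            · rw [show j = 1 by omega]; exact hA.1
            · rw [h]; exact hA.2
        · rw [hmidadj i j hi1 hij (by omega)]
          constructor
          · exact fun h => Or.inl h
          · rintro (h | ⟨h, -⟩)
            · exact h
            · omega
      obtain ⟨w, r, hr, hrlen⟩ := exists_hole G y L hL4 (by rw [hy0, hyL])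
        (fun i hi j hj => hgvinj i j hi hj) hadjiff
      exact hG1 w r hr (hrlen ▸ hodd')
    · by_cases hB : G.Adj b (y 1) ∧ G.Adj b (y (L - 1))
      · -- replace c by b : odd hole in G
        set f : ℕ → V := fun i => if i = 0 ∨ L ≤ i then b else y i with hfdef
        have hf0 : f 0 = b := by simp [hfdef]
        have hfL : f L = b := by simp [hfdef]
        have hfm : ∀ i, 1 ≤ i → i ≤ L - 1 → f i = y i := by
          intro i h1 h2
          simp only [hfdef]
          rw [if_neg (by omega)]
        have hfinj : ∀ i, i < L → ∀ j, j < L → f i = f j → i = j := by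
          intro i hi j hj hij
          rcases Nat.eq_zero_or_pos i with rfl | hi1
          · rcases Nat.eq_zero_or_pos j with rfl | hj1
            · rfl
            · rw [hf0, hfm j hj1 (by omega)] at hij
              exact absurd hij.symm (hynb j)
          · rcases Nat.eq_zero_or_pos j with rfl | hj1
            · rw [hf0, hfm i hi1 (by omega)] at hij
              exact absurd hij (hynb i)
            · rw [hfm i hi1 (by omega), hfm j hj1 (by omega)] at hij
              exact hgvinj i j hi hj hij
        have hfadj : ∀ i j, i < j → j < L →
            (G.Adj (f i) (f j) ↔ (j = i + 1 ∨ (i = 0 ∧ j = L - 1))) := by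
          intro i j hij hj
          rcases Nat.eq_zero_or_pos i with rfl | hi1
          · rw [hf0, hfm j (by omega) (by omega)]
            constructor
            · intro h
              by_contra hcon
              push_neg at hcon
              exact (hcm j (by omega) (by omega)).2 h
            · rintro (h | ⟨-, h⟩)
              · rw [show j = 1 by omega]; exact hB.1
              · rw [h]; exact hB.2
          · rw [hfm i hi1 (by omega), hfm j (by omega) (by omega),
              hmidadj i j hi1 hij (by omega)]
            constructor
            · exact fun h => Or.inl h
            · rintro (h | ⟨h, -⟩)
              · exact h
              · omega
        obtain ⟨w, r, hr, hrlen⟩ := exists_hole G f L hL4 (by rw [hf0, hfL]) hfinj hfadj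
        exact hG1 w r hr (hrlen ▸ hodd')
      · -- odd chordless path from a to b
        have hpath : ∃ g : ℕ → V, g 0 = a ∧ g L = b ∧
            (∀ i, i ≤ L → ∀ j, j ≤ L → g i = g j → i = j) ∧
            (∀ i j, i < j → j ≤ L → (G.Adj (g i) (g j) ↔ j = i + 1)) := by
          by_cases ha1 : G.Adj a (y 1)
          · have haL : ¬ G.Adj a (y (L - 1)) := fun h => hA ⟨ha1, h⟩
            have hbL : G.Adj b (y (L - 1)) := by
              rcases hcL with h | h
              · exact absurd h haL
              · exact h
            have hb1 : ¬ G.Adj b (y 1) := fun h => hB ⟨h, hbL⟩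
            refine ⟨fun i => if i = 0 then a else if L ≤ i then b else y i,
              by simp, by simp [show ¬ (L = 0) by omega], ?_, ?_⟩
            · intro i hi j hj hij
              simp only at hij
              rcases Nat.eq_zero_or_pos i with rfl | hi1
              · rcases Nat.eq_zero_or_pos j with rfl | hj1
                · rfl
                · rw [if_pos rfl] at hij
                  rcases Nat.lt_or_ge j L with hjL | hjL
                  · rw [if_neg (by omega), if_neg (by omega)] at hij
                    exact absurd hij.symm (hyna j hj1 (by omega))
                  · rw [if_neg (by omega), if_pos (by omega)] at hij
                    exact absurd hij hne
              · rcases Nat.eq_zero_or_pos j with rfl | hj1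
                · rw [if_pos rfl] at hij
                  rcases Nat.lt_or_ge i L with hiL | hiL
                  · rw [if_neg (by omega), if_neg (by omega)] at hij
                    exact absurd hij (hyna i hi1 (by omega))
                  · rw [if_neg (by omega), if_pos (by omega)] at hij
                    exact absurd hij.symm hne
                · rcases Nat.lt_or_ge i L with hiL | hiL
                  · rcases Nat.lt_or_ge j L with hjL | hjL
                    · rw [if_neg (by omega), if_neg (by omega), if_neg (by omega),
                        if_neg (by omega)] at hij
                      exact hgvinj i j hiL hjL hij
                    · rw [if_neg (by omega), if_neg (by omega), if_neg (by omega),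
                        if_pos (by omega)] at hij
                      exact absurd hij (hynb i)
                  · rcases Nat.lt_or_ge j L with hjL | hjL
                    · rw [if_neg (by omega), if_pos (by omega), if_neg (by omega),
                        if_neg (by omega)] at hij
                      exact absurd hij.symm (hynb j)
                    · omega
            · intro i j hij hj
              simp only
              rcases Nat.eq_zero_or_pos i with rfl | hi1
              · rw [if_pos rfl]
                rcases Nat.lt_or_ge j L with hjL | hjL
                · rw [if_neg (by omega), if_neg (by omega)]
                  constructor
                  · intro h
                    by_contra hcon
                    rcases Nat.lt_or_ge j (L - 1) with hj2 | hj2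
                    · exact (hcm j (by omega) (by omega)).1 h
                    · rw [show j = L - 1 by omega] at h
                      exact haL h
                  · intro h
                    rw [show j = 1 by omega]
                    exact ha1
                · rw [if_neg (by omega), if_pos (by omega)]
                  constructor
                  · exact fun h => absurd h hnadj
                  · omega
              · rw [if_neg (by omega), if_neg (by omega)]
                rcases Nat.lt_or_ge j L with hjL | hjL
                · rw [if_neg (by omega), if_neg (by omega)]
                  rw [hmidadj i j hi1 hij (by omega)]
                · have hjL' : j = L := by omega
                  subst hjL'
                  rw [if_neg (show ¬ (L = 0) by omega), if_pos (le_refl L)]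
                  constructor
                  · intro h
                    by_contra hcon
                    have hiL2 : i ≤ L - 2 := by omega
                    rcases Nat.eq_or_lt_of_le hi1 with h1 | h1
                    · rw [← h1] at h
                      exact hb1 h.symm
                    · exact (hcm i (by omega) hiL2).2 h.symm
                  · intro h
                    rw [show i = L - 1 by omega]
                    exact hbL.symm
          · have hb1 : G.Adj b (y 1) := by
              rcases hc1 with h | h
              · exact absurd h ha1
              · exact h
            have hbL : ¬ G.Adj b (y (L - 1)) := fun h => hB ⟨hb1, h⟩
            have haL : G.Adj a (y (L - 1)) := by
              rcases hcL with h | h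
              · exact h
              · exact absurd h hbL
            refine ⟨fun i => if i = 0 then a else if L ≤ i then b else y (L - i),
              by simp, by simp [show ¬ (L = 0) by omega], ?_, ?_⟩
            · intro i hi j hj hij
              simp only at hij
              rcases Nat.eq_zero_or_pos i with rfl | hi1
              · rcases Nat.eq_zero_or_pos j with rfl | hj1
                · rfl
                · rw [if_pos rfl] at hij
                  rcases Nat.lt_or_ge j L with hjL | hjL
                  · rw [if_neg (by omega), if_neg (by omega)] at hij
                    exact absurd hij.symm (hyna (L - j) (by omega) (by omega))
                  · rw [if_neg (by omega), if_pos (by omega)] at hij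
                    exact absurd hij hne
              · rcases Nat.eq_zero_or_pos j with rfl | hj1
                · rw [if_pos rfl] at hij
                  rcases Nat.lt_or_ge i L with hiL | hiL
                  · rw [if_neg (by omega), if_neg (by omega)] at hij
                    exact absurd hij (hyna (L - i) (by omega) (by omega))
                  · rw [if_neg (by omega), if_pos (by omega)] at hij
                    exact absurd hij.symm hne
                · rcases Nat.lt_or_ge i L with hiL | hiL
                  · rcases Nat.lt_or_ge j L with hjL | hjL
                    · rw [if_neg (by omega), if_neg (by omega), if_neg (by omega),
                        if_neg (by omega)] at hij
                      have := hgvinj (L - i) (L - j) (by omega) (by omega) hij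
                      omega
                    · rw [if_neg (by omega), if_neg (by omega), if_neg (by omega),
                        if_pos (by omega)] at hij
                      exact absurd hij (hynb (L - i))
                  · rcases Nat.lt_or_ge j L with hjL | hjL
                    · rw [if_neg (by omega), if_pos (by omega), if_neg (by omega),
                        if_neg (by omega)] at hij
                      exact absurd hij.symm (hynb (L - j))
                    · omega
            · intro i j hij hj
              simp only
              rcases Nat.eq_zero_or_pos i with rfl | hi1
              · rw [if_pos rfl]
                rcases Nat.lt_or_ge j L with hjL | hjL
                · rw [if_neg (by omega), if_neg (by omega)]
                  constructor
                  · intro h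
                    by_contra hcon
                    rcases Nat.lt_or_ge j (L - 1) with hj2 | hj2
                    · exact (hcm (L - j) (by omega) (by omega)).1 h
                    · rw [show L - j = 1 by omega] at h
                      exact ha1 h
                  · intro h
                    rw [show j = 1 by omega, show L - 1 = L - 1 by rfl]
                    exact haL
                · rw [if_neg (by omega), if_pos (by omega)]
                  constructor
                  · exact fun h => absurd h hnadj
                  · omega
              · rw [if_neg (by omega), if_neg (by omega)]
                rcases Nat.lt_or_ge j L with hjL | hjL
                · rw [if_neg (by omega), if_neg (by omega)]
                  rw [G.adj_comm, hmidadj (L - j) (L - i) (by omega) (by omega) (by omega)]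
                  omega
                · have hjL' : j = L := by omega
                  subst hjL'
                  rw [if_neg (show ¬ (L = 0) by omega), if_pos (le_refl L)]
                  constructor
                  · intro h
                    by_contra hcon
                    rcases Nat.eq_or_lt_of_le hi1 with h1 | h1
                    · rw [← h1] at h
                      rw [show L - 1 = L - 1 by rfl] at h
                      exact hbL h.symm
                    · exact (hcm (L - i) (by omega) (by omega)).2 h.symm
                  · intro h
                    rw [show L - i = 1 by omega]
                    exact hb1.symm
        obtain ⟨g, hg0, hgL, hginj, hgadj⟩ := hpath
        obtain ⟨r, hr, hrlen⟩ := exists_chordless_path_s1 G g L hginj hgadj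
        have := heven (r.copy hg0 hgL) ((IsChordless_copy r hg0 hgL).mpr hr)
        rw [Walk.length_copy, hrlen] at this
        exact (Nat.not_odd_iff_even.mpr this) hodd'
  · -- the hole avoids the contracted vertex
    obtain ⟨hinj, hadj⟩ := hole_facts hp
    have hL4 : 4 ≤ p.length := hp.2.1
    have hxne : ∀ i, i ≤ p.length → (p.getVert i).1 ≠ a := by
      intro i hi h
      exact hcmem (by
        have : p.getVert i = c := Subtype.ext h
        rw [← this]
        exact Walk.mem_support_iff_exists_getVert.mpr ⟨i, rfl, hi⟩)
    obtain ⟨w, r, hr, hrlen⟩ := exists_hole G (fun i => (p.getVert i).1) p.length hL4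
      (by simp [Walk.getVert_length])
      (fun i hi j hj hij => hinj i j hi hj (Subtype.ext hij))
      (by
        intro i j hij hj
        rw [← hadj i j hij hj]
        exact (contract_adj_of_ne (hxne i (by omega)) (hxne j (by omega))).symm)
    exact hG1 w r hr (hrlen ▸ hodd)

lemma single_edge_path {W : Type} {G' : SimpleGraph W} {u v : W} (h : G'.Adj u v) :
    (Walk.cons h Walk.nil).IsPath := by
  apply Walk.IsPath.mk'
  simp [h.ne]

lemma single_edge_toSubgraph_adj {W : Type} {G' : SimpleGraph W} {p q u v : W}
    (h : G'.Adj p q) :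
    (Walk.cons h Walk.nil).toSubgraph.Adj u v ↔ s(u, v) = s(p, q) := by
  simp only [Walk.toSubgraph, SimpleGraph.Subgraph.sup_adj, SimpleGraph.subgraphOfAdj_adj,
    SimpleGraph.singletonSubgraph_adj, Pi.bot_apply]
  constructor
  · rintro (h' | h')
    · exact h'.symm
    · exact absurd h' (by simp [Prop.bot_eq_false])
  · exact fun h' => Or.inl h'.symm

set_option maxHeartbeats 1000000 in
/-- A 6-antihole is a prism. -/
lemma antihole6_prism {W : Type} {G' : SimpleGraph W} (x : ℕ → W)
    (hinj : ∀ i, i < 6 → ∀ j, j < 6 → x i = x j → i = j)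
    (hadjx : ∀ i j, i < j → j < 6 → (G'.Adj (x i) (x j) ↔ ¬(j = i + 1 ∨ (i = 0 ∧ j = 5)))) :
    ∃ S, IsPrismOn G' S := by
  have hadj2 : ∀ i j, i < 6 → j < 6 →
      (G'.Adj (x i) (x j) ↔ (i ≠ j ∧ j ≠ i + 1 ∧ i ≠ j + 1 ∧ ¬(i = 0 ∧ j = 5) ∧
        ¬(j = 0 ∧ i = 5))) := by
    intro i j hi hj
    rcases lt_trichotomy i j with h | h | h
    · rw [hadjx i j h hj]; omega
    · subst h
      simp only [SimpleGraph.irrefl, false_iff]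
      omega
    · rw [G'.adj_comm, hadjx j i h hi]; omega
  have hne : ∀ i j, i < 6 → j < 6 → i ≠ j → x i ≠ x j :=
    fun i j hi hj hij h => hij (hinj i hi j hj h)
  have hsym : ∀ i j p q : ℕ, i < 6 → j < 6 → p < 6 → q < 6 →
      (s(x i, x j) = s(x p, x q) ↔ ((i = p ∧ j = q) ∨ (i = q ∧ j = p))) := by
    intro i j p q hi hj hp hq
    rw [Sym2.eq_iff]
    constructor
    · rintro (⟨h1, h2⟩ | ⟨h1, h2⟩)
      · exact Or.inl ⟨hinj _ hi _ hp h1, hinj _ hj _ hq h2⟩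
      · exact Or.inr ⟨hinj _ hi _ hq h1, hinj _ hj _ hp h2⟩
    · rintro (⟨rfl, rfl⟩ | ⟨rfl, rfl⟩)
      · exact Or.inl ⟨rfl, rfl⟩
      · exact Or.inr ⟨rfl, rfl⟩
  have ha03 : G'.Adj (x 0) (x 3) := (hadj2 0 3 (by omega) (by omega)).mpr (by omega)
  have ha25 : G'.Adj (x 2) (x 5) := (hadj2 2 5 (by omega) (by omega)).mpr (by omega)
  have ha41 : G'.Adj (x 4) (x 1) := (hadj2 4 1 (by omega) (by omega)).mpr (by omega)
  set P₁ : G'.Walk (x 0) (x 3) := Walk.cons ha03 Walk.nil with hP1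
  set P₂ : G'.Walk (x 2) (x 5) := Walk.cons ha25 Walk.nil with hP2
  set P₃ : G'.Walk (x 4) (x 1) := Walk.cons ha41 Walk.nil with hP3
  have hS1 : ∀ u, u ∈ P₁.support ↔ (u = x 0 ∨ u = x 3) := by intro u; simp [hP1]
  have hS2 : ∀ u, u ∈ P₂.support ↔ (u = x 2 ∨ u = x 5) := by intro u; simp [hP2]
  have hS3 : ∀ u, u ∈ P₃.support ↔ (u = x 4 ∨ u = x 1) := by intro u; simp [hP3]
  refine ⟨{v | v ∈ P₁.support ∨ v ∈ P₂.support ∨ v ∈ P₃.support}, ?_⟩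
  refine ⟨x 0, x 2, x 4, x 3, x 5, x 1, P₁, P₂, P₃, ?_⟩
  refine ⟨single_edge_path ha03, single_edge_path ha25, single_edge_path ha41,
    ha03.ne, ha25.ne, ha41.ne, ?_, ?_, ?_, rfl, ?_⟩
  · intro u hu v hv
    rcases (hS1 u).mp hu with rfl | rfl <;> rcases (hS2 v).mp hv with rfl | rfl <;>
      exact hne _ _ (by omega) (by omega) (by omega)
  · intro u hu v hv
    rcases (hS1 u).mp hu with rfl | rfl <;> rcases (hS3 v).mp hv with rfl | rfl <;>
      exact hne _ _ (by omega) (by omega) (by omega)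
  · intro u hu v hv
    rcases (hS2 u).mp hu with rfl | rfl <;> rcases (hS3 v).mp hv with rfl | rfl <;>
      exact hne _ _ (by omega) (by omega) (by omega)
  · intro u hu v hv
    have hu' : ∃ i, i < 6 ∧ u = x i := by
      rcases hu with h | h | h
      · rcases (hS1 u).mp h with rfl | rfl
        · exact ⟨0, by omega, rfl⟩
        · exact ⟨3, by omega, rfl⟩
      · rcases (hS2 u).mp h with rfl | rfl
        · exact ⟨2, by omega, rfl⟩
        · exact ⟨5, by omega, rfl⟩
      · rcases (hS3 u).mp h with rfl | rfl
        · exact ⟨4, by omega, rfl⟩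
        · exact ⟨1, by omega, rfl⟩
    have hv' : ∃ j, j < 6 ∧ v = x j := by
      rcases hv with h | h | h
      · rcases (hS1 v).mp h with rfl | rfl
        · exact ⟨0, by omega, rfl⟩
        · exact ⟨3, by omega, rfl⟩
      · rcases (hS2 v).mp h with rfl | rfl
        · exact ⟨2, by omega, rfl⟩
        · exact ⟨5, by omega, rfl⟩
      · rcases (hS3 v).mp h with rfl | rfl
        · exact ⟨4, by omega, rfl⟩
        · exact ⟨1, by omega, rfl⟩
    obtain ⟨i, hi, rfl⟩ := hu'
    obtain ⟨j, hj, rfl⟩ := hv'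
    rw [hadj2 i j hi hj, single_edge_toSubgraph_adj ha03, single_edge_toSubgraph_adj ha25,
      single_edge_toSubgraph_adj ha41]
    simp only [Set.mem_insert_iff, Set.mem_singleton_iff]
    rw [hsym i j 0 3 hi hj (by omega) (by omega), hsym i j 2 5 hi hj (by omega) (by omega),
      hsym i j 4 1 hi hj (by omega) (by omega), hsym i j 0 2 hi hj (by omega) (by omega),
      hsym i j 0 4 hi hj (by omega) (by omega), hsym i j 2 4 hi hj (by omega) (by omega),
      hsym i j 3 5 hi hj (by omega) (by omega), hsym i j 3 1 hi hj (by omega) (by omega),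
      hsym i j 5 1 hi hj (by omega) (by omega)]
    have key : ∀ (i j : Fin 6), ((i:ℕ) ≠ j ∧ (j:ℕ) ≠ i + 1 ∧ (i:ℕ) ≠ j + 1 ∧
        ¬((i:ℕ) = 0 ∧ (j:ℕ) = 5) ∧ ¬((j:ℕ) = 0 ∧ (i:ℕ) = 5) ↔
      ((i:ℕ) = 0 ∧ (j:ℕ) = 3 ∨ (i:ℕ) = 3 ∧ (j:ℕ) = 0) ∨
        ((i:ℕ) = 2 ∧ (j:ℕ) = 5 ∨ (i:ℕ) = 5 ∧ (j:ℕ) = 2) ∨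
          ((i:ℕ) = 4 ∧ (j:ℕ) = 1 ∨ (i:ℕ) = 1 ∧ (j:ℕ) = 4) ∨
            ((i:ℕ) = 0 ∧ (j:ℕ) = 2 ∨ (i:ℕ) = 2 ∧ (j:ℕ) = 0) ∨
              ((i:ℕ) = 0 ∧ (j:ℕ) = 4 ∨ (i:ℕ) = 4 ∧ (j:ℕ) = 0) ∨
                ((i:ℕ) = 2 ∧ (j:ℕ) = 4 ∨ (i:ℕ) = 4 ∧ (j:ℕ) = 2) ∨
                  ((i:ℕ) = 3 ∧ (j:ℕ) = 5 ∨ (i:ℕ) = 5 ∧ (j:ℕ) = 3) ∨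
                    ((i:ℕ) = 3 ∧ (j:ℕ) = 1 ∨ (i:ℕ) = 1 ∧ (j:ℕ) = 3) ∨
                      (i:ℕ) = 5 ∧ (j:ℕ) = 1 ∨ (i:ℕ) = 1 ∧ (j:ℕ) = 5) := by decide
    exact key ⟨i, hi⟩ ⟨j, hj⟩

/-- Contracting a special even pair creates no antihole of length at least 5. -/
lemma contract_no_big_antihole {G : SimpleGraph V} {a b : V}
    (hG2 : ∀ (v : V) (p : Gᶜ.Walk v v), IsHole Gᶜ p → ¬ 5 ≤ p.length)
    (hep : IsEvenPair G a b)
    (hnoprism : ¬ ∃ S, IsPrismOn (contract G a b) S) :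
    ∀ (v : {z : V // z ≠ b}) (p : (contract G a b)ᶜ.Walk v v),
      IsHole (contract G a b)ᶜ p → ¬ 5 ≤ p.length := by
  classical
  obtain ⟨hne, hnadj, heven⟩ := hep
  set c : {z : V // z ≠ b} := (⟨a, fun h => hne h⟩ : {z : V // z ≠ b}) with hcdef
  have hcval : c.1 = a := rfl
  intro v p hp h5
  by_cases hcmem : c ∈ p.support
  swap
  · -- the antihole avoids the contracted vertex
    obtain ⟨hinj, hadj⟩ := hole_facts hp
    have hL4 : 4 ≤ p.length := hp.2.1
    have hxne : ∀ i, i ≤ p.length → (p.getVert i).1 ≠ a := by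
      intro i hi h
      exact hcmem (by
        have : p.getVert i = c := Subtype.ext h
        rw [← this]
        exact Walk.mem_support_iff_exists_getVert.mpr ⟨i, rfl, hi⟩)
    obtain ⟨w, r, hr, hrlen⟩ := exists_hole Gᶜ (fun i => (p.getVert i).1) p.length hL4
      (by simp [Walk.getVert_length])
      (fun i hi j hj hij => hinj i j hi hj (Subtype.ext hij))
      (by
        intro i j hij hj
        rw [← hadj i j hij hj]
        rw [SimpleGraph.compl_adj, SimpleGraph.compl_adj]
        constructor
        · rintro ⟨h1, h2⟩
          refine ⟨fun he => h1 (congrArg Subtype.val he), fun hA => h2 ?_⟩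
          exact (contract_adj_of_ne (hxne i (by omega)) (hxne j (by omega))).mp hA
        · rintro ⟨h1, h2⟩
          refine ⟨fun he => h1 (Subtype.ext he), fun hA => h2 ?_⟩
          exact (contract_adj_of_ne (hxne i (by omega)) (hxne j (by omega))).mpr hA)
    exact hG2 w r hr (by rw [hrlen]; exact h5)
  · -- the antihole goes through the contracted vertex
    obtain ⟨hq, hlen'⟩ := IsHole.rotate' hp hcmem
    set q := p.rotate c hcmem with hqdef
    have h5' : 5 ≤ q.length := by rw [hlen']; exact h5
    obtain ⟨hinj0, hadj0⟩ := hole_facts hq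
    set k := q.length with hkdef
    have hk4 : 4 ≤ k := hq.2.1
    by_cases hk6 : k = 6
    · -- a 6-antihole in the contraction is a prism
      refine hnoprism (antihole6_prism (fun i => q.getVert i) ?_ ?_)
      · intro i hi j hj hij
        exact hinj0 i j (by omega) (by omega) hij
      · intro i j hij hj
        have h' := hadj0 i j hij (by omega)
        have hxne : q.getVert i ≠ q.getVert j := fun he => by
          have := hinj0 i j (by omega) (by omega) he; omega
        constructor
        · intro hA hcons
          have hcc : (contract G a b)ᶜ.Adj (q.getVert i) (q.getVert j) :=
            h'.mpr (by omega)
          exact ((SimpleGraph.compl_adj _ _ _).mp hcc).2 hA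
        · intro hnc
          have hno : ¬ (contract G a b)ᶜ.Adj (q.getVert i) (q.getVert j) := by
            intro hcc
            have := h'.mp hcc
            omega
          rw [SimpleGraph.compl_adj] at hno
          push_neg at hno
          exact hno hxne
    · -- now k = 5 or k ≥ 7
      have hgv0 : q.getVert 0 = c := q.getVert_zero
      set y : ℕ → V := fun i => (q.getVert i).1 with hydef
      have hgvinj : ∀ i j, i < k → j < k → y i = y j → i = j := by
        intro i j hi hj hij
        exact hinj0 i j hi hj (Subtype.ext hij)
      have hxnec : ∀ i, 1 ≤ i → i ≤ k - 1 → q.getVert i ≠ c := by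
        intro i h1 h2 h
        have : y i = y 0 := by rw [hydef]; simp [h, hgv0]
        have := hgvinj i 0 (by omega) (by omega) this
        omega
      have hyna : ∀ i, 1 ≤ i → i ≤ k - 1 → y i ≠ a := by
        intro i h1 h2 h
        exact hxnec i h1 h2 (Subtype.ext (h.trans hcval.symm))
      have hynb : ∀ i, y i ≠ b := fun i => (q.getVert i).2
      have hGy : ∀ i j, 1 ≤ i → i < j → j ≤ k - 1 → (G.Adj (y i) (y j) ↔ j ≠ i + 1) := by
        intro i j h1 h2 h3
        have h' := hadj0 i j h2 (by omega)
        have hxne : q.getVert i ≠ q.getVert j := fun he => by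
          have := hgvinj i j (by omega) (by omega) (by rw [hydef]; simp [he]); omega
        rw [SimpleGraph.compl_adj] at h'
        have hGb := contract_adj_of_ne (G := G) (a := a) (b := b)
          (hyna i h1 (by omega)) (hyna j (by omega) h3)
        constructor
        · intro hA heq
          have h'' : q.getVert i ≠ q.getVert j ∧
              ¬ (contract G a b).Adj (q.getVert i) (q.getVert j) := h'.mpr (Or.inl heq)
          exact h''.2 (hGb.mpr hA)
        · intro hneq
          by_contra hnA
          have hnc : ¬ (contract G a b).Adj (q.getVert i) (q.getVert j) :=
            fun hA => hnA (hGb.mp hA)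
          have := h'.mp ⟨hxne, hnc⟩
          omega
      have hYadj : ∀ s t, 1 ≤ s → s ≤ k - 1 → 1 ≤ t → t ≤ k - 1 →
          (G.Adj (y s) (y t) ↔ (s ≠ t ∧ t ≠ s + 1 ∧ s ≠ t + 1)) := by
        intro s t hs1 hsk ht1 htk
        rcases lt_trichotomy s t with h | h | h
        · rw [hGy s t hs1 h htk]; omega
        · subst h
          constructor
          · intro hA; exact absurd hA (G.irrefl)
          · rintro ⟨h1, -, -⟩; exact absurd rfl h1
        · rw [G.adj_comm, hGy t s ht1 h hsk]; omega
      have hcadj : ∀ j, 1 ≤ j → j ≤ k - 1 →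
          ((contract G a b)ᶜ.Adj c (q.getVert j) ↔ (j = 1 ∨ j = k - 1)) := by
        intro j h1 h2
        have := hadj0 0 j (by omega) (by omega)
        rw [hgv0] at this
        rw [this]
        constructor
        · rintro (h | ⟨-, h⟩)
          · exact Or.inl (by omega)
          · exact Or.inr h
        · rintro (h | h)
          · exact Or.inl (by omega)
          · exact Or.inr ⟨rfl, h⟩
      have hNab : ∀ j, 2 ≤ j → j ≤ k - 2 → (G.Adj a (y j) ∨ G.Adj b (y j)) := by
        intro j h1 h2
        have hnc : ¬ (contract G a b)ᶜ.Adj c (q.getVert j) := by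
          intro h
          have := (hcadj j (by omega) (by omega)).mp h
          omega
        rw [SimpleGraph.compl_adj] at hnc
        push_neg at hnc
        have hA := hnc (fun he => (hxnec j (by omega) (by omega)) he.symm)
        exact (contract_adj_c hcval (hxnec j (by omega) (by omega))).mp hA
      have hNend : ∀ j, 1 ≤ j → j ≤ k - 1 → (j = 1 ∨ j = k - 1) →
          ¬ G.Adj a (y j) ∧ ¬ G.Adj b (y j) := by
        intro j h1 h2 hj
        have h := (hcadj j h1 h2).mpr hj
        rw [SimpleGraph.compl_adj] at h
        have hnA := h.2
        constructor
        · intro hadj'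
          exact hnA ((contract_adj_c hcval (hxnec j h1 h2)).mpr (Or.inl hadj'))
        · intro hadj'
          exact hnA ((contract_adj_c hcval (hxnec j h1 h2)).mpr (Or.inr hadj'))
      have hNa1 := hNend 1 le_rfl (by omega) (Or.inl rfl)
      have hNak := hNend (k - 1) (by omega) le_rfl (Or.inr rfl)
      have gap_contra : ∀ w : V, (∀ i, 1 ≤ i → i ≤ k - 1 → y i ≠ w) →
          ∀ s t, 1 ≤ s → s < t → t ≤ k - 1 → 3 ≤ t - s →
          ¬ G.Adj w (y s) → ¬ G.Adj w (y t) →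
          (∀ m, s < m → m < t → G.Adj w (y m)) → False := by
        intro w hwne s t hs1 hst htk h3 hws hwt hmid
        set n := t - s + 2 with hn
        set f : ℕ → V := fun r => if r = 0 ∨ n ≤ r then w else y (s + r - 1) with hfdef
        have hf0 : f 0 = w := by simp [hfdef]
        have hfn : f n = w := by simp [hfdef]
        have hfm : ∀ r, 1 ≤ r → r ≤ n - 1 → f r = y (s + r - 1) := by
          intro r h1 h2
          simp only [hfdef]
          rw [if_neg (by omega)]
        have hinjf : ∀ i, i < n → ∀ j, j < n → f i = f j → i = j := by
          intro i hi j hj hij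
          rcases Nat.eq_zero_or_pos i with rfl | hi1
          · rcases Nat.eq_zero_or_pos j with rfl | hj1
            · rfl
            · rw [hf0, hfm j hj1 (by omega)] at hij
              exact absurd hij.symm (hwne (s + j - 1) (by omega) (by omega))
          · rcases Nat.eq_zero_or_pos j with rfl | hj1
            · rw [hf0, hfm i hi1 (by omega)] at hij
              exact absurd hij (hwne (s + i - 1) (by omega) (by omega))
            · rw [hfm i hi1 (by omega), hfm j hj1 (by omega)] at hij
              have := hgvinj (s + i - 1) (s + j - 1) (by omega) (by omega) hij
              omega
        have hadjf : ∀ i j, i < j → j < n →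
            (Gᶜ.Adj (f i) (f j) ↔ (j = i + 1 ∨ (i = 0 ∧ j = n - 1))) := by
          intro i j hij hj
          rcases Nat.eq_zero_or_pos i with rfl | hi1
          · rw [hf0, hfm j (by omega) (by omega), SimpleGraph.compl_adj]
            constructor
            · rintro ⟨hne', hnadj'⟩
              by_contra hcon
              push_neg at hcon
              exact hnadj' (hmid (s + j - 1) (by omega) (by omega))
            · intro hor
              refine ⟨(hwne (s + j - 1) (by omega) (by omega)).symm, ?_⟩
              rcases hor with h | ⟨-, h⟩
              · rw [show s + j - 1 = s by omega]
                exact hws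
              · rw [show s + j - 1 = t by omega]
                exact hwt
          · rw [hfm i hi1 (by omega), hfm j (by omega) (by omega), SimpleGraph.compl_adj]
            have hGy' := hGy (s + i - 1) (s + j - 1) (by omega) (by omega) (by omega)
            constructor
            · rintro ⟨hne', hnadj'⟩
              rw [hGy'] at hnadj'
              push_neg at hnadj'
              omega
            · intro hor
              refine ⟨?_, ?_⟩
              · intro he
                have := hgvinj (s + i - 1) (s + j - 1) (by omega) (by omega) he
                omega
              · rw [hGy']
                push_neg
                omega
        obtain ⟨v', r', hr', hrlen'⟩ := exists_hole Gᶜ f n (by omega) (by rw [hf0, hfn])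
          hinjf hadjf
        exact hG2 v' r' hr' (by omega)
      have extract_lo : ∀ w : V, (∀ i, 1 ≤ i → i ≤ k - 1 → y i ≠ w) →
          ¬ G.Adj w (y 1) → ¬ G.Adj w (y (k - 1)) →
          ∃ t, 2 ≤ t ∧ t ≤ 3 ∧ ¬ G.Adj w (y t) := by
        intro w hwne hw1 hwk
        have hex : ∃ t, 2 ≤ t ∧ t ≤ k - 1 ∧ ¬ G.Adj w (y t) := ⟨k - 1, by omega, le_rfl, hwk⟩
        obtain ⟨h2, hk1, hnadjt⟩ := Nat.find_spec hex
        refine ⟨Nat.find hex, h2, ?_, hnadjt⟩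
        by_contra h4
        push_neg at h4
        refine gap_contra w hwne 1 (Nat.find hex) le_rfl (by omega) hk1 (by omega) hw1 hnadjt ?_
        intro m hm1 hm2
        by_contra hnm
        exact Nat.find_min hex hm2 ⟨by omega, by omega, hnm⟩
      have extract_hi : ∀ w : V, (∀ i, 1 ≤ i → i ≤ k - 1 → y i ≠ w) →
          ¬ G.Adj w (y 1) → ¬ G.Adj w (y (k - 1)) →
          ∃ s, k - 3 ≤ s ∧ s ≤ k - 2 ∧ ¬ G.Adj w (y s) := by
        intro w hwne hw1 hwk
        have hex : ∃ r, 2 ≤ r ∧ r ≤ k - 1 ∧ ¬ G.Adj w (y (k - r)) :=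
          ⟨k - 1, by omega, le_rfl, by rw [show k - (k - 1) = 1 by omega]; exact hw1⟩
        obtain ⟨h2, hk1, hnadjr⟩ := Nat.find_spec hex
        refine ⟨k - Nat.find hex, ?_, by omega, hnadjr⟩
        by_contra hcon
        push_neg at hcon
        have hr4 : 4 ≤ Nat.find hex := by omega
        refine gap_contra w hwne (k - Nat.find hex) (k - 1) (by omega) (by omega) le_rfl
          (by omega) hnadjr hwk ?_
        intro m hm1 hm2
        by_contra hnm
        have hmr : k - m < Nat.find hex := by omega
        exact Nat.find_min hex hmr ⟨by omega, by omega,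
          by rw [show k - (k - m) = m by omega]; exact hnm⟩
      have path3 : ∀ i j, 2 ≤ i → i ≤ k - 2 → 2 ≤ j → j ≤ k - 2 →
          G.Adj a (y i) → ¬ G.Adj b (y i) → G.Adj b (y j) → ¬ G.Adj a (y j) →
          j ≠ i + 1 → i ≠ j + 1 → i ≠ j → False := by
        intro i j hi2 hik hj2 hjk hai hbi hbj haj hne1 hne2 hne3
        have hyij : G.Adj (y i) (y j) :=
          (hYadj i j (by omega) (by omega) (by omega) (by omega)).mpr (by omega)
        set g : ℕ → V := fun t => if t = 0 then a else if t = 1 then y i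
          else if t = 2 then y j else b with hgdef
        have hg0 : g 0 = a := by norm_num [hgdef]
        have hg1 : g 1 = y i := by norm_num [hgdef]
        have hg2 : g 2 = y j := by norm_num [hgdef]
        have hg3 : g 3 = b := by norm_num [hgdef]
        have hd0 : y i ≠ a := hyna i (by omega) (by omega)
        have hd1 : y j ≠ a := hyna j (by omega) (by omega)
        have hdij : y i ≠ y j := fun h => by
          have := hgvinj i j (by omega) (by omega) h; omega
        have hinjg : ∀ s, s ≤ 3 → ∀ t, t ≤ 3 → g s = g t → s = t := by
          intro s hs t ht hst
          interval_cases s <;> interval_cases t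
          · rfl
          · rw [hg0, hg1] at hst
            exact absurd hst (Ne.symm hd0)
          · rw [hg0, hg2] at hst
            exact absurd hst (Ne.symm hd1)
          · rw [hg0, hg3] at hst
            exact absurd hst (hne)
          · rw [hg1, hg0] at hst
            exact absurd hst.symm (Ne.symm hd0)
          · rfl
          · rw [hg1, hg2] at hst
            exact absurd hst (hdij)
          · rw [hg1, hg3] at hst
            exact absurd hst (hynb i)
          · rw [hg2, hg0] at hst
            exact absurd hst.symm (Ne.symm hd1)
          · rw [hg2, hg1] at hst
            exact absurd hst.symm (hdij)
          · rfl
          · rw [hg2, hg3] at hst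
            exact absurd hst (hynb j)
          · rw [hg3, hg0] at hst
            exact absurd hst.symm (hne)
          · rw [hg3, hg1] at hst
            exact absurd hst.symm (hynb i)
          · rw [hg3, hg2] at hst
            exact absurd hst.symm (hynb j)
          · rfl
        have hadjg : ∀ s t, s < t → t ≤ 3 → (G.Adj (g s) (g t) ↔ t = s + 1) := by
          intro s t hst ht
          interval_cases t <;> interval_cases s
          · rw [hg0, hg1]
            exact iff_of_true (hai) (by norm_num)
          · rw [hg0, hg2]
            exact iff_of_false (haj) (by norm_num)
          · rw [hg1, hg2]
            exact iff_of_true (hyij) (by norm_num)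
          · rw [hg0, hg3]
            exact iff_of_false (hnadj) (by norm_num)
          · rw [hg1, hg3]
            exact iff_of_false (fun h => hbi h.symm) (by norm_num)
          · rw [hg2, hg3]
            exact iff_of_true (hbj.symm) (by norm_num)
        obtain ⟨r, hr, hrlen⟩ := exists_chordless_path_s1 G g 3 hinjg hadjg
        have hev := heven (r.copy hg0 hg3) ((IsChordless_copy r hg0 hg3).mpr hr)
        rw [Walk.length_copy, hrlen] at hev
        obtain ⟨m, hm⟩ := hev
        omega
      have path5gen : ∀ m1 m2 m3 m4 : ℕ,
          1 ≤ m1 → m1 ≤ k - 1 → 1 ≤ m2 → m2 ≤ k - 1 → 1 ≤ m3 → m3 ≤ k - 1 →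
          1 ≤ m4 → m4 ≤ k - 1 →
          m1 ≠ m2 → m1 ≠ m3 → m1 ≠ m4 → m2 ≠ m3 → m2 ≠ m4 → m3 ≠ m4 →
          G.Adj a (y m1) → G.Adj (y m1) (y m2) → G.Adj (y m2) (y m3) →
          G.Adj (y m3) (y m4) → G.Adj (y m4) b →
          ¬ G.Adj a (y m2) → ¬ G.Adj a (y m3) → ¬ G.Adj a (y m4) →
          ¬ G.Adj (y m1) (y m3) → ¬ G.Adj (y m1) (y m4) → ¬ G.Adj (y m1) b →
          ¬ G.Adj (y m2) (y m4) → ¬ G.Adj (y m2) b → ¬ G.Adj (y m3) b → False := by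
        intro m1 m2 m3 m4 hb1 hb1' hb2 hb2' hb3 hb3' hb4 hb4'
          hne12 hne13 hne14 hne23 hne24 hne34
          e01 e12 e23 e34 e45 n02 n03 n04 n13 n14 n15 n24 n25 n35
        have hdm1m2 : y m1 ≠ y m2 := fun h => hne12 (hgvinj m1 m2 (by omega) (by omega) h)
        have hdm1m3 : y m1 ≠ y m3 := fun h => hne13 (hgvinj m1 m3 (by omega) (by omega) h)
        have hdm1m4 : y m1 ≠ y m4 := fun h => hne14 (hgvinj m1 m4 (by omega) (by omega) h)
        have hdm2m3 : y m2 ≠ y m3 := fun h => hne23 (hgvinj m2 m3 (by omega) (by omega) h)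
        have hdm2m4 : y m2 ≠ y m4 := fun h => hne24 (hgvinj m2 m4 (by omega) (by omega) h)
        have hdm3m4 : y m3 ≠ y m4 := fun h => hne34 (hgvinj m3 m4 (by omega) (by omega) h)
        set g : ℕ → V := fun t => if t = 0 then a else if t = 1 then y m1
          else if t = 2 then y m2 else if t = 3 then y m3 else if t = 4 then y m4
          else b with hgdef
        have hg0 : g 0 = a := by norm_num [hgdef]
        have hg1 : g 1 = y m1 := by norm_num [hgdef]
        have hg2 : g 2 = y m2 := by norm_num [hgdef]
        have hg3 : g 3 = y m3 := by norm_num [hgdef]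
        have hg4 : g 4 = y m4 := by norm_num [hgdef]
        have hg5 : g 5 = b := by norm_num [hgdef]
        have hinjg : ∀ s, s ≤ 5 → ∀ t, t ≤ 5 → g s = g t → s = t := by
          intro s hs t ht hst
          interval_cases s <;> interval_cases t
          · rfl
          · rw [hg0, hg1] at hst
            exact absurd hst (Ne.symm (hyna m1 (by omega) (by omega)))
          · rw [hg0, hg2] at hst
            exact absurd hst (Ne.symm (hyna m2 (by omega) (by omega)))
          · rw [hg0, hg3] at hst
            exact absurd hst (Ne.symm (hyna m3 (by omega) (by omega)))
          · rw [hg0, hg4] at hst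
            exact absurd hst (Ne.symm (hyna m4 (by omega) (by omega)))
          · rw [hg0, hg5] at hst
            exact absurd hst (hne)
          · rw [hg1, hg0] at hst
            exact absurd hst.symm (Ne.symm (hyna m1 (by omega) (by omega)))
          · rfl
          · rw [hg1, hg2] at hst
            exact absurd hst (hdm1m2)
          · rw [hg1, hg3] at hst
            exact absurd hst (hdm1m3)
          · rw [hg1, hg4] at hst
            exact absurd hst (hdm1m4)
          · rw [hg1, hg5] at hst
            exact absurd hst (hynb m1)
          · rw [hg2, hg0] at hst
            exact absurd hst.symm (Ne.symm (hyna m2 (by omega) (by omega)))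
          · rw [hg2, hg1] at hst
            exact absurd hst.symm (hdm1m2)
          · rfl
          · rw [hg2, hg3] at hst
            exact absurd hst (hdm2m3)
          · rw [hg2, hg4] at hst
            exact absurd hst (hdm2m4)
          · rw [hg2, hg5] at hst
            exact absurd hst (hynb m2)
          · rw [hg3, hg0] at hst
            exact absurd hst.symm (Ne.symm (hyna m3 (by omega) (by omega)))
          · rw [hg3, hg1] at hst
            exact absurd hst.symm (hdm1m3)
          · rw [hg3, hg2] at hst
            exact absurd hst.symm (hdm2m3)
          · rfl
          · rw [hg3, hg4] at hst
            exact absurd hst (hdm3m4)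
          · rw [hg3, hg5] at hst
            exact absurd hst (hynb m3)
          · rw [hg4, hg0] at hst
            exact absurd hst.symm (Ne.symm (hyna m4 (by omega) (by omega)))
          · rw [hg4, hg1] at hst
            exact absurd hst.symm (hdm1m4)
          · rw [hg4, hg2] at hst
            exact absurd hst.symm (hdm2m4)
          · rw [hg4, hg3] at hst
            exact absurd hst.symm (hdm3m4)
          · rfl
          · rw [hg4, hg5] at hst
            exact absurd hst (hynb m4)
          · rw [hg5, hg0] at hst
            exact absurd hst.symm (hne)
          · rw [hg5, hg1] at hst
            exact absurd hst.symm (hynb m1)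
          · rw [hg5, hg2] at hst
            exact absurd hst.symm (hynb m2)
          · rw [hg5, hg3] at hst
            exact absurd hst.symm (hynb m3)
          · rw [hg5, hg4] at hst
            exact absurd hst.symm (hynb m4)
          · rfl
        have hadjg : ∀ s t, s < t → t ≤ 5 → (G.Adj (g s) (g t) ↔ t = s + 1) := by
          intro s t hst ht
          interval_cases t <;> interval_cases s
          · rw [hg0, hg1]
            exact iff_of_true (e01) (by norm_num)
          · rw [hg0, hg2]
            exact iff_of_false (n02) (by norm_num)
          · rw [hg1, hg2]
            exact iff_of_true (e12) (by norm_num)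
          · rw [hg0, hg3]
            exact iff_of_false (n03) (by norm_num)
          · rw [hg1, hg3]
            exact iff_of_false (n13) (by norm_num)
          · rw [hg2, hg3]
            exact iff_of_true (e23) (by norm_num)
          · rw [hg0, hg4]
            exact iff_of_false (n04) (by norm_num)
          · rw [hg1, hg4]
            exact iff_of_false (n14) (by norm_num)
          · rw [hg2, hg4]
            exact iff_of_false (n24) (by norm_num)
          · rw [hg3, hg4]
            exact iff_of_true (e34) (by norm_num)
          · rw [hg0, hg5]
            exact iff_of_false (hnadj) (by norm_num)
          · rw [hg1, hg5]
            exact iff_of_false (n15) (by norm_num)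
          · rw [hg2, hg5]
            exact iff_of_false (n25) (by norm_num)
          · rw [hg3, hg5]
            exact iff_of_false (n35) (by norm_num)
          · rw [hg4, hg5]
            exact iff_of_true (e45) (by norm_num)
        obtain ⟨r, hr, hrlen⟩ := exists_chordless_path_s1 G g 5 hinjg hadjg
        have hev := heven (r.copy hg0 hg5) ((IsChordless_copy r hg0 hg5).mpr hr)
        rw [Walk.length_copy, hrlen] at hev
        obtain ⟨m, hm⟩ := hev
        omega
      -- extraction of close non-neighbours of a and b
      obtain ⟨ta, hta2, hta3, hnata⟩ := extract_lo a hyna hNa1.1 hNak.1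
      obtain ⟨sa, hsa1, hsa2, hnasa⟩ := extract_hi a hyna hNa1.1 hNak.1
      obtain ⟨tb, htb2, htb3, hnbtb⟩ := extract_lo b (fun i _ _ => hynb i) hNa1.2 hNak.2
      obtain ⟨sb, hsb1, hsb2, hnbsb⟩ := extract_hi b (fun i _ _ => hynb i) hNa1.2 hNak.2
      have hbta : G.Adj b (y ta) := (hNab ta (by omega) (by omega)).resolve_left hnata
      have hbsa : G.Adj b (y sa) := (hNab sa (by omega) (by omega)).resolve_left hnasa
      have hatb : G.Adj a (y tb) := (hNab tb (by omega) (by omega)).resolve_right hnbtb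
      have hasb : G.Adj a (y sb) := (hNab sb (by omega) (by omega)).resolve_right hnbsb
      have hpair : ∀ i j, 2 ≤ i → i ≤ k - 2 → 2 ≤ j → j ≤ k - 2 →
          G.Adj a (y i) → ¬ G.Adj b (y i) → G.Adj b (y j) → ¬ G.Adj a (y j) →
          (j = i + 1 ∨ i = j + 1) := by
        intro i j hi2 hik hj2 hjk hai hbi hbj haj
        by_contra hcon
        push_neg at hcon
        exact path3 i j hi2 hik hj2 hjk hai hbi hbj haj hcon.1 hcon.2
          (fun he => haj (he ▸ hai))
      rcases Nat.lt_or_ge k 7 with hk5 | hk7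
      · -- k = 5
        have hk5' : k = 5 := by omega
        have htane : ta ≠ tb := fun he => hnata (he ▸ hatb)
        have hNak4 : ¬ G.Adj a (y 4) ∧ ¬ G.Adj b (y 4) := by
          rw [show (4 : ℕ) = k - 1 by omega]
          exact hNak
        rcases (by omega : (tb = 2 ∧ ta = 3) ∨ (tb = 3 ∧ ta = 2)) with ⟨h2, h3⟩ | ⟨h2, h3⟩
        · subst h2; subst h3
          refine path5gen 2 4 1 3 (by omega) (by omega) (by omega) (by omega) (by omega)
            (by omega) (by omega) (by omega) (by omega) (by omega) (by omega) (by omega)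
            (by omega) (by omega)
            hatb
            ((hYadj 2 4 (by omega) (by omega) (by omega) (by omega)).mpr (by omega))
            ((hYadj 4 1 (by omega) (by omega) (by omega) (by omega)).mpr (by omega))
            ((hYadj 1 3 (by omega) (by omega) (by omega) (by omega)).mpr (by omega))
            hbta.symm
            hNak4.1 hNa1.1 hnata
            (fun h => by
              have := (hYadj 2 1 (by omega) (by omega) (by omega) (by omega)).mp h; omega)
            (fun h => by
              have := (hYadj 2 3 (by omega) (by omega) (by omega) (by omega)).mp h; omega)
            (fun h => hnbtb h.symm)
            (fun h => by
              have := (hYadj 4 3 (by omega) (by omega) (by omega) (by omega)).mp h; omega)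
            (fun h => hNak4.2 h.symm)
            (fun h => hNa1.2 h.symm)
        · subst h2; subst h3
          refine path5gen 3 1 4 2 (by omega) (by omega) (by omega) (by omega) (by omega)
            (by omega) (by omega) (by omega) (by omega) (by omega) (by omega) (by omega)
            (by omega) (by omega)
            hatb
            ((hYadj 3 1 (by omega) (by omega) (by omega) (by omega)).mpr (by omega))
            ((hYadj 1 4 (by omega) (by omega) (by omega) (by omega)).mpr (by omega))
            ((hYadj 4 2 (by omega) (by omega) (by omega) (by omega)).mpr (by omega))
            hbta.symm
            hNa1.1 hNak4.1 hnata
            (fun h => by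
              have := (hYadj 3 4 (by omega) (by omega) (by omega) (by omega)).mp h; omega)
            (fun h => by
              have := (hYadj 3 2 (by omega) (by omega) (by omega) (by omega)).mp h; omega)
            (fun h => hnbtb h.symm)
            (fun h => by
              have := (hYadj 1 2 (by omega) (by omega) (by omega) (by omega)).mp h; omega)
            (fun h => hNa1.2 h.symm)
            (fun h => hNak4.2 h.symm)
      · -- k ≥ 7
        have h1 := hpair sb ta (by omega) (by omega) (by omega) (by omega)
          hasb hnbsb hbta hnata
        have h2 := hpair tb sa (by omega) (by omega) (by omega) (by omega)
          hatb hnbtb hbsa hnasa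
        have : ta = tb := by omega
        exact hnata (this ▸ hatb)

end Helpers

/-- If `G` is in the class 𝒜 and `{a, b}` is a special even pair of `G`, then `G/ab`
is in the class 𝒜. -/
theorem contract_special_even_pair_mem_Artemis
    {V : Type} [Fintype V] (G : SimpleGraph V) (a b : V)
    (hG : InArtemis G) (hab : IsSpecialEvenPair G a b) :
    InArtemis (contract G a b) := by
  obtain ⟨hG1, hG2, -⟩ := hG
  exact ⟨contract_no_odd_hole hG1 hab.1, contract_no_big_antihole hG2 hab.1 hab.2, hab.2⟩
end

section
/- A finite simple graph G has no interesting set if and only if G is a disjoint union of cliques (i.e., every connected component of G is a clique). -/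
open SimpleGraph

lemma exists_cherry {V : Type} (G : SimpleGraph V) {x y : V} (p : G.Walk x y)
    (hxy : x ≠ y) (hne : ¬ G.Adj x y) :
    ∃ m a b, a ≠ b ∧ ¬ G.Adj a b ∧ G.Adj m a ∧ G.Adj m b := by
  induction p with
  | nil => exact absurd rfl hxy
  | @cons u z w h q ih =>
    by_cases hzw : z = w
    · exact absurd (hzw ▸ h) hne
    by_cases hadj : G.Adj z w
    · exact ⟨z, u, w, hxy, hne, h.symm, hadj⟩
    · exact ih hzw hadj

/-- A finite simple graph has no interesting set iff it is a disjoint union of cliques,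
i.e. every connected component is a clique. -/
theorem no_interesting_iff_disjoint_union_of_cliques
    {V : Type} [Fintype V] (G : SimpleGraph V) :
    (¬ ∃ T : Set V, IsInteresting G T) ↔
      ∀ c : G.ConnectedComponent, G.IsClique c.supp := by
  constructor
  · intro hno c
    intro x hx y hy hxy
    by_contra hne
    have hx' : G.connectedComponentMk x = c := hx
    have hy' : G.connectedComponentMk y = c := hy
    have hr : G.Reachable x y := ConnectedComponent.exact (hx'.trans hy'.symm)
    obtain ⟨p⟩ := hr
    obtain ⟨m, a, b, hab, hnab, hma, hmb⟩ := exists_cherry G p hxy hne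
    apply hno
    refine ⟨{m}, ⟨m, rfl⟩, ?_, ?_⟩
    · haveI : Nonempty ({m} : Set V) := ⟨⟨m, rfl⟩⟩
      refine ⟨fun u v => ?_⟩
      have : u = v := Subtype.ext (by
        have hu := u.2; have hv := v.2
        simp only [Set.mem_singleton_iff] at hu hv
        rw [hu, hv])
      exact this ▸ Reachable.refl _
    · intro hcl
      have ha : a ∈ Cset G {m} := by
        refine ⟨fun h => ?_, fun t ht => ?_⟩
        · simp only [Set.mem_singleton_iff] at h; exact G.irrefl (h ▸ hma)
        · simp only [Set.mem_singleton_iff] at ht; exact ht ▸ hma.symm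
      have hb : b ∈ Cset G {m} := by
        refine ⟨fun h => ?_, fun t ht => ?_⟩
        · simp only [Set.mem_singleton_iff] at h; exact G.irrefl (h ▸ hmb)
        · simp only [Set.mem_singleton_iff] at ht; exact ht ▸ hmb.symm
      exact hnab (hcl ha hb hab)
  · rintro hcl ⟨T, ⟨hTne, hTconn, hCnot⟩⟩
    apply hCnot
    intro u hu v hv huv
    obtain ⟨t, ht⟩ := hTne
    have hut : G.Adj u t := hu.2 t ht
    have hvt : G.Adj v t := hv.2 t ht
    have hmem_u : u ∈ (G.connectedComponentMk t).supp :=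
      (ConnectedComponent.mem_supp_iff _ _).mpr (ConnectedComponent.sound hut.reachable)
    have hmem_v : v ∈ (G.connectedComponentMk t).supp :=
      (ConnectedComponent.mem_supp_iff _ _).mpr (ConnectedComponent.sound hvt.reachable)
    exact hcl _ hmem_u hmem_v huv
end

section
/- Let G be a graph in the class 𝒜 that contains an interesting set, and let T be any maximal interesting set in G. If there is no T-outer path, then every special even pair of the induced subgraph G[C(T)] is a special even pair of G. -/
open SimpleGraph

section WalkLemmas

variable {X : Type} {H : SimpleGraph X}

lemma walk_tsa_iff {x y u v : X} (p : H.Walk x y) :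
    p.toSubgraph.Adj u v ↔ s(u, v) ∈ p.edges := by
  induction p with
  | nil => simp [Walk.toSubgraph]
  | cons h q ih =>
    simp only [Walk.toSubgraph, Subgraph.sup_adj, subgraphOfAdj_adj, ih, Walk.edges_cons,
      List.mem_cons]
    constructor
    · rintro (h' | h')
      · left; rw [← h']
      · right; exact h'
    · rintro (h' | h')
      · left; rw [h']
      · right; exact h'

lemma walk_endpoint_edge {x y v : X} {p : H.Walk x y} (hp : p.IsPath) (he : s(x, v) ∈ p.edges) :
    ∃ (h : H.Adj x v) (q : H.Walk v y), p = Walk.cons h q := by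
  cases p with
  | nil => simp at he
  | @cons _ w _ h q =>
    rw [Walk.edges_cons, List.mem_cons] at he
    rcases he with he | he
    · rw [Sym2.eq_iff] at he
      rcases he with ⟨-, rfl⟩ | ⟨hxw, rfl⟩
      · exact ⟨h, q, rfl⟩
      · exact absurd (hxw ▸ q.start_mem_support) ((Walk.cons_isPath_iff h q).mp hp).2
    · exact absurd (Walk.fst_mem_support_of_mem_edges q he) ((Walk.cons_isPath_iff h q).mp hp).2

lemma walk_endpoint_unique {x y v v' : X} {p : H.Walk x y} (hp : p.IsPath)
    (he : s(x, v) ∈ p.edges) (he' : s(x, v') ∈ p.edges) : v = v' := by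
  obtain ⟨h, q, rfl⟩ := walk_endpoint_edge hp he
  rw [Walk.edges_cons, List.mem_cons] at he'
  rcases he' with h' | h'
  · rw [Sym2.eq_iff] at h'
    rcases h' with ⟨-, rfl⟩ | ⟨hxv, -⟩
    · rfl
    · exact absurd hxv h.ne
  · exact absurd (Walk.fst_mem_support_of_mem_edges q h')
      ((Walk.cons_isPath_iff h q).mp hp).2

lemma path_loop_nil {x : X} {p : H.Walk x x} (hp : p.IsPath) : p = Walk.nil := by
  cases p with
  | nil => rfl
  | cons h q => exact absurd q.end_mem_support ((Walk.cons_isPath_iff h q).mp hp).2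

lemma walk_support_inter [DecidableEq X] {x y u v : X} {p : H.Walk x y} (hp : p.IsPath) (hu : u ∈ p.support)
    (h1 : v ∈ (p.takeUntil u hu).support) (h2 : v ∈ (p.dropUntil u hu).support) : v = u := by
  have hnd : p.support.Nodup := hp.support_nodup
  rw [← p.take_spec hu, Walk.support_append] at hnd
  have hd := (List.nodup_append'.mp hnd).2.2
  by_contra hne
  have h2' : v ∈ (p.dropUntil u hu).support.tail := by
    have := (p.dropUntil u hu).support_eq_cons
    rw [this, List.mem_cons] at h2
    tauto
  exact hd h1 h2'

lemma chordless_edges {x y : X} {p : H.Walk x y} (hp : IsChordless H p)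
    {u v : X} (hu : u ∈ p.support) (hv : v ∈ p.support) (h : H.Adj u v) :
    s(u, v) ∈ p.edges :=
  (walk_tsa_iff p).mp (hp.2 u v hu hv h)

lemma chordless_takeUntil [DecidableEq X] {x y u : X} {p : H.Walk x y} (hp : IsChordless H p)
    (hu : u ∈ p.support) : IsChordless H (p.takeUntil u hu) := by
  refine ⟨hp.1.takeUntil hu, fun w z hw hz hadj => ?_⟩
  have hw' := p.support_takeUntil_subset hu hw
  have hz' := p.support_takeUntil_subset hu hz
  have he := chordless_edges hp hw' hz' hadj
  rw [walk_tsa_iff]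
  rw [← p.take_spec hu, Walk.edges_append, List.mem_append] at he
  rcases he with he | he
  · exact he
  · exfalso
    have hwd := Walk.fst_mem_support_of_mem_edges _ he
    have hzd := Walk.snd_mem_support_of_mem_edges _ he
    have := walk_support_inter hp.1 hu hw hwd
    have := walk_support_inter hp.1 hu hz hzd
    subst this; exact hadj.ne (by assumption)

lemma chordless_dropUntil [DecidableEq X] {x y u : X} {p : H.Walk x y} (hp : IsChordless H p)
    (hu : u ∈ p.support) : IsChordless H (p.dropUntil u hu) := by
  refine ⟨hp.1.dropUntil hu, fun w z hw hz hadj => ?_⟩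
  have hw' := p.support_dropUntil_subset hu hw
  have hz' := p.support_dropUntil_subset hu hz
  have he := chordless_edges hp hw' hz' hadj
  rw [walk_tsa_iff]
  rw [← p.take_spec hu, Walk.edges_append, List.mem_append] at he
  rcases he with he | he
  · exfalso
    have hwd := Walk.fst_mem_support_of_mem_edges _ he
    have hzd := Walk.snd_mem_support_of_mem_edges _ he
    have := walk_support_inter hp.1 hu hwd hw
    have := walk_support_inter hp.1 hu hzd hz
    subst this; exact hadj.ne (by assumption)
  · exact he

lemma walk_length_pos_of_ne {x y : X} (p : H.Walk x y) (h : x ≠ y) : 1 ≤ p.length := by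
  cases p with
  | nil => exact absurd rfl h
  | cons h q => simp

/-- attach a vertex `x` adjacent to the start of a chordless walk, producing a
chordless walk from `x`. -/
lemma chordless_attach [DecidableEq X] :
    ∀ (n : ℕ) {s y x : X} (r : H.Walk s y), r.length ≤ n → IsChordless H r →
      H.Adj x s → x ∉ r.support →
      ∃ p : H.Walk x y, IsChordless H p ∧ ∀ v ∈ p.support, v = x ∨ v ∈ r.support := by
  intro n
  induction n using Nat.strong_induction_on with
  | _ n ih =>
    intro s y x r hlen hr hxs hxr
    by_cases hv : ∃ v ∈ r.support, v ≠ s ∧ H.Adj x v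
    · obtain ⟨v, hv, hvs, hxv⟩ := hv
      have hlt : (r.dropUntil v hv).length < r.length := by
        have := congr_arg Walk.length (r.take_spec hv)
        rw [Walk.length_append] at this
        have h1 : 1 ≤ (r.takeUntil v hv).length :=
          walk_length_pos_of_ne _ (Ne.symm hvs)
        omega
      rcases n with _ | n
      · omega
      · obtain ⟨p, hp, hps⟩ := ih (r.dropUntil v hv).length (by omega) (r.dropUntil v hv)
          le_rfl (chordless_dropUntil hr hv) hxv
          (fun hc => hxr (r.support_dropUntil_subset hv hc))
        exact ⟨p, hp, fun w hw => (hps w hw).imp id (fun hc => r.support_dropUntil_subset hv hc)⟩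
    · push_neg at hv
      refine ⟨Walk.cons hxs r, ⟨(Walk.cons_isPath_iff hxs r).mpr ⟨hr.1, hxr⟩, ?_⟩,
        fun w hw => by rw [Walk.support_cons, List.mem_cons] at hw; exact hw⟩
      intro u w hu hw hadj
      rw [Walk.support_cons, List.mem_cons] at hu hw
      rw [walk_tsa_iff, Walk.edges_cons, List.mem_cons]
      rcases hu with rfl | hu
      · rcases hw with rfl | hw
        · exact absurd hadj (H.irrefl)
        · have := hv w hw
          have hws : w = s := by by_contra hne; exact this hne hadj
          subst hws; left; rfl
      · rcases hw with rfl | hw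
        · have := hv u hu
          have hus : u = s := by by_contra hne; exact this hne hadj.symm
          subst hus; left; exact Sym2.eq_swap
        · right; exact chordless_edges hr hu hw hadj

/-- From any walk, extract a chordless walk with support inside the original support. -/
lemma exists_chordless [DecidableEq X] {x y : X} (w : H.Walk x y) :
    ∃ p : H.Walk x y, IsChordless H p ∧ ∀ v ∈ p.support, v ∈ w.support := by
  induction w with
  | nil =>
    refine ⟨Walk.nil, ⟨Walk.IsPath.nil, ?_⟩, fun v hv => hv⟩
    intro u v hu hv hadj
    simp only [Walk.support_nil, List.mem_singleton] at hu hv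
    subst hu; subst hv; exact absurd hadj (H.irrefl)
  | @cons x x₁ y h w' ih =>
    obtain ⟨r, hr, hrs⟩ := ih
    by_cases hx : x ∈ r.support
    · refine ⟨r.dropUntil x hx, chordless_dropUntil hr hx, fun v hv => ?_⟩
      rw [Walk.support_cons, List.mem_cons]
      exact Or.inr (hrs v (r.support_dropUntil_subset hx hv))
    · obtain ⟨p, hp, hps⟩ := chordless_attach r.length r le_rfl hr h hx
      refine ⟨p, hp, fun v hv => ?_⟩
      rw [Walk.support_cons, List.mem_cons]
      rcases hps v hv with rfl | hv'
      · exact Or.inl rfl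
      · exact Or.inr (hrs v hv')

/-- lift a walk along an adjacency preserving map. -/
lemma exists_lift {X Y : Type} {H : SimpleGraph X} {H' : SimpleGraph Y} (f : X → Y) {S : Set X}
    (hadj : ∀ u v, u ∈ S → v ∈ S → H.Adj u v → H'.Adj (f u) (f v)) :
    ∀ {x y} (p : H.Walk x y), (∀ v ∈ p.support, v ∈ S) →
      ∃ q : H'.Walk (f x) (f y), q.length = p.length ∧ q.support = p.support.map f ∧
        q.edges = p.edges.map (Sym2.map f) := by
  intro x y p
  induction p with
  | nil => exact fun _ => ⟨Walk.nil, by simp⟩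
  | @cons x x₁ y h p ih =>
    intro hs
    obtain ⟨q, hl, hsup, he⟩ := ih (fun v hv => hs v (by rw [Walk.support_cons]; exact List.mem_cons_of_mem _ hv))
    refine ⟨Walk.cons (hadj x x₁ (hs x (by simp)) (hs x₁ (by simp)) h) q, by simp [hl], ?_, ?_⟩
    · simp [hsup]
    · simp [he]

end WalkLemmas

section Corn
variable {X : Type}

def cornAdj (a₁ a₂ a₃ b₁ b₂ b₃ u v : X) : Prop :=
  ((u = a₁ ∧ v = a₂) ∨ (u = a₂ ∧ v = a₁)) ∨ ((u = a₁ ∧ v = a₃) ∨ (u = a₃ ∧ v = a₁)) ∨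
  ((u = a₂ ∧ v = a₃) ∨ (u = a₃ ∧ v = a₂)) ∨ ((u = b₁ ∧ v = b₂) ∨ (u = b₂ ∧ v = b₁)) ∨
  ((u = b₁ ∧ v = b₃) ∨ (u = b₃ ∧ v = b₁)) ∨ ((u = b₂ ∧ v = b₃) ∨ (u = b₃ ∧ v = b₂))

lemma cornAdj_iff (a₁ a₂ a₃ b₁ b₂ b₃ u v : X) :
    s(u,v) ∈ ({s(a₁, a₂), s(a₁, a₃), s(a₂, a₃), s(b₁, b₂), s(b₁, b₃), s(b₂, b₃)} : Set (Sym2 X)) ↔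
    cornAdj a₁ a₂ a₃ b₁ b₂ b₃ u v := by
  simp only [cornAdj, Set.mem_insert_iff, Set.mem_singleton_iff, Sym2.eq_iff]

lemma cornAdj_perm12 (a₁ a₂ a₃ b₁ b₂ b₃ u v : X) :
    cornAdj a₁ a₂ a₃ b₁ b₂ b₃ u v ↔ cornAdj a₂ a₁ a₃ b₂ b₁ b₃ u v := by
  unfold cornAdj
  constructor
  · rintro ((h|h)|(h|h)|(h|h)|(h|h)|(h|h)|(h|h))
    · exact (Or.inl (Or.inr h))
    · exact (Or.inl (Or.inl h))
    · exact (Or.inr (Or.inr (Or.inl (Or.inl h))))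
    · exact (Or.inr (Or.inr (Or.inl (Or.inr h))))
    · exact (Or.inr (Or.inl (Or.inl h)))
    · exact (Or.inr (Or.inl (Or.inr h)))
    · exact (Or.inr (Or.inr (Or.inr (Or.inl (Or.inr h)))))
    · exact (Or.inr (Or.inr (Or.inr (Or.inl (Or.inl h)))))
    · exact (Or.inr (Or.inr (Or.inr (Or.inr (Or.inr (Or.inl h))))))
    · exact (Or.inr (Or.inr (Or.inr (Or.inr (Or.inr (Or.inr h))))))
    · exact (Or.inr (Or.inr (Or.inr (Or.inr (Or.inl (Or.inl h))))))
    · exact (Or.inr (Or.inr (Or.inr (Or.inr (Or.inl (Or.inr h))))))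
  · rintro ((h|h)|(h|h)|(h|h)|(h|h)|(h|h)|(h|h))
    · exact (Or.inl (Or.inr h))
    · exact (Or.inl (Or.inl h))
    · exact (Or.inr (Or.inr (Or.inl (Or.inl h))))
    · exact (Or.inr (Or.inr (Or.inl (Or.inr h))))
    · exact (Or.inr (Or.inl (Or.inl h)))
    · exact (Or.inr (Or.inl (Or.inr h)))
    · exact (Or.inr (Or.inr (Or.inr (Or.inl (Or.inr h)))))
    · exact (Or.inr (Or.inr (Or.inr (Or.inl (Or.inl h)))))
    · exact (Or.inr (Or.inr (Or.inr (Or.inr (Or.inr (Or.inl h))))))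
    · exact (Or.inr (Or.inr (Or.inr (Or.inr (Or.inr (Or.inr h))))))
    · exact (Or.inr (Or.inr (Or.inr (Or.inr (Or.inl (Or.inl h))))))
    · exact (Or.inr (Or.inr (Or.inr (Or.inr (Or.inl (Or.inr h))))))

lemma cornAdj_perm13 (a₁ a₂ a₃ b₁ b₂ b₃ u v : X) :
    cornAdj a₁ a₂ a₃ b₁ b₂ b₃ u v ↔ cornAdj a₃ a₂ a₁ b₃ b₂ b₁ u v := by
  unfold cornAdj
  constructor
  · rintro ((h|h)|(h|h)|(h|h)|(h|h)|(h|h)|(h|h))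
    · exact (Or.inr (Or.inr (Or.inl (Or.inr h))))
    · exact (Or.inr (Or.inr (Or.inl (Or.inl h))))
    · exact (Or.inr (Or.inl (Or.inr h)))
    · exact (Or.inr (Or.inl (Or.inl h)))
    · exact (Or.inl (Or.inr h))
    · exact (Or.inl (Or.inl h))
    · exact (Or.inr (Or.inr (Or.inr (Or.inr (Or.inr (Or.inr h))))))
    · exact (Or.inr (Or.inr (Or.inr (Or.inr (Or.inr (Or.inl h))))))
    · exact (Or.inr (Or.inr (Or.inr (Or.inr (Or.inl (Or.inr h))))))
    · exact (Or.inr (Or.inr (Or.inr (Or.inr (Or.inl (Or.inl h))))))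
    · exact (Or.inr (Or.inr (Or.inr (Or.inl (Or.inr h)))))
    · exact (Or.inr (Or.inr (Or.inr (Or.inl (Or.inl h)))))
  · rintro ((h|h)|(h|h)|(h|h)|(h|h)|(h|h)|(h|h))
    · exact (Or.inr (Or.inr (Or.inl (Or.inr h))))
    · exact (Or.inr (Or.inr (Or.inl (Or.inl h))))
    · exact (Or.inr (Or.inl (Or.inr h)))
    · exact (Or.inr (Or.inl (Or.inl h)))
    · exact (Or.inl (Or.inr h))
    · exact (Or.inl (Or.inl h))
    · exact (Or.inr (Or.inr (Or.inr (Or.inr (Or.inr (Or.inr h))))))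
    · exact (Or.inr (Or.inr (Or.inr (Or.inr (Or.inr (Or.inl h))))))
    · exact (Or.inr (Or.inr (Or.inr (Or.inr (Or.inl (Or.inr h))))))
    · exact (Or.inr (Or.inr (Or.inr (Or.inr (Or.inl (Or.inl h))))))
    · exact (Or.inr (Or.inr (Or.inr (Or.inl (Or.inr h)))))
    · exact (Or.inr (Or.inr (Or.inr (Or.inl (Or.inl h)))))

lemma cornAdj_swap (a₁ a₂ a₃ b₁ b₂ b₃ u v : X) :
    cornAdj a₁ a₂ a₃ b₁ b₂ b₃ u v ↔ cornAdj b₁ b₂ b₃ a₁ a₂ a₃ u v := by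
  unfold cornAdj
  constructor
  · rintro ((h|h)|(h|h)|(h|h)|(h|h)|(h|h)|(h|h))
    · exact (Or.inr (Or.inr (Or.inr (Or.inl (Or.inl h)))))
    · exact (Or.inr (Or.inr (Or.inr (Or.inl (Or.inr h)))))
    · exact (Or.inr (Or.inr (Or.inr (Or.inr (Or.inl (Or.inl h))))))
    · exact (Or.inr (Or.inr (Or.inr (Or.inr (Or.inl (Or.inr h))))))
    · exact (Or.inr (Or.inr (Or.inr (Or.inr (Or.inr (Or.inl h))))))
    · exact (Or.inr (Or.inr (Or.inr (Or.inr (Or.inr (Or.inr h))))))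
    · exact (Or.inl (Or.inl h))
    · exact (Or.inl (Or.inr h))
    · exact (Or.inr (Or.inl (Or.inl h)))
    · exact (Or.inr (Or.inl (Or.inr h)))
    · exact (Or.inr (Or.inr (Or.inl (Or.inl h))))
    · exact (Or.inr (Or.inr (Or.inl (Or.inr h))))
  · rintro ((h|h)|(h|h)|(h|h)|(h|h)|(h|h)|(h|h))
    · exact (Or.inr (Or.inr (Or.inr (Or.inl (Or.inl h)))))
    · exact (Or.inr (Or.inr (Or.inr (Or.inl (Or.inr h)))))
    · exact (Or.inr (Or.inr (Or.inr (Or.inr (Or.inl (Or.inl h))))))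
    · exact (Or.inr (Or.inr (Or.inr (Or.inr (Or.inl (Or.inr h))))))
    · exact (Or.inr (Or.inr (Or.inr (Or.inr (Or.inr (Or.inl h))))))
    · exact (Or.inr (Or.inr (Or.inr (Or.inr (Or.inr (Or.inr h))))))
    · exact (Or.inl (Or.inl h))
    · exact (Or.inl (Or.inr h))
    · exact (Or.inr (Or.inl (Or.inl h)))
    · exact (Or.inr (Or.inl (Or.inr h)))
    · exact (Or.inr (Or.inr (Or.inl (Or.inl h))))
    · exact (Or.inr (Or.inr (Or.inl (Or.inr h))))

lemma cornAdj_symm (a₁ a₂ a₃ b₁ b₂ b₃ u v : X) :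
    cornAdj a₁ a₂ a₃ b₁ b₂ b₃ u v ↔ cornAdj a₁ a₂ a₃ b₁ b₂ b₃ v u := by
  unfold cornAdj
  constructor <;>
    (rintro ((⟨h1,h2⟩|⟨h1,h2⟩)|(⟨h1,h2⟩|⟨h1,h2⟩)|(⟨h1,h2⟩|⟨h1,h2⟩)|(⟨h1,h2⟩|⟨h1,h2⟩)|(⟨h1,h2⟩|⟨h1,h2⟩)|(⟨h1,h2⟩|⟨h1,h2⟩)) <;>
      subst h1 <;> subst h2)
  · exact Or.inl (Or.inr ⟨rfl, rfl⟩)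
  · exact Or.inl (Or.inl ⟨rfl, rfl⟩)
  · exact Or.inr (Or.inl (Or.inr ⟨rfl, rfl⟩))
  · exact Or.inr (Or.inl (Or.inl ⟨rfl, rfl⟩))
  · exact Or.inr (Or.inr (Or.inl (Or.inr ⟨rfl, rfl⟩)))
  · exact Or.inr (Or.inr (Or.inl (Or.inl ⟨rfl, rfl⟩)))
  · exact Or.inr (Or.inr (Or.inr (Or.inl (Or.inr ⟨rfl, rfl⟩))))
  · exact Or.inr (Or.inr (Or.inr (Or.inl (Or.inl ⟨rfl, rfl⟩))))
  · exact Or.inr (Or.inr (Or.inr (Or.inr (Or.inl (Or.inr ⟨rfl, rfl⟩)))))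
  · exact Or.inr (Or.inr (Or.inr (Or.inr (Or.inl (Or.inl ⟨rfl, rfl⟩)))))
  · exact Or.inr (Or.inr (Or.inr (Or.inr (Or.inr (Or.inr ⟨rfl, rfl⟩)))))
  · exact Or.inr (Or.inr (Or.inr (Or.inr (Or.inr (Or.inl ⟨rfl, rfl⟩)))))
  · exact Or.inl (Or.inr ⟨rfl, rfl⟩)
  · exact Or.inl (Or.inl ⟨rfl, rfl⟩)
  · exact Or.inr (Or.inl (Or.inr ⟨rfl, rfl⟩))
  · exact Or.inr (Or.inl (Or.inl ⟨rfl, rfl⟩))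
  · exact Or.inr (Or.inr (Or.inl (Or.inr ⟨rfl, rfl⟩)))
  · exact Or.inr (Or.inr (Or.inl (Or.inl ⟨rfl, rfl⟩)))
  · exact Or.inr (Or.inr (Or.inr (Or.inl (Or.inr ⟨rfl, rfl⟩))))
  · exact Or.inr (Or.inr (Or.inr (Or.inl (Or.inl ⟨rfl, rfl⟩))))
  · exact Or.inr (Or.inr (Or.inr (Or.inr (Or.inl (Or.inr ⟨rfl, rfl⟩)))))
  · exact Or.inr (Or.inr (Or.inr (Or.inr (Or.inl (Or.inl ⟨rfl, rfl⟩)))))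
  · exact Or.inr (Or.inr (Or.inr (Or.inr (Or.inr (Or.inr ⟨rfl, rfl⟩)))))
  · exact Or.inr (Or.inr (Or.inr (Or.inr (Or.inr (Or.inl ⟨rfl, rfl⟩)))))

end Corn

section PrismMap

variable {Xt Yt : Type} {H : SimpleGraph Xt} {H' : SimpleGraph Yt}

lemma lifted_tsa {S : Set Xt} {f : Xt → Yt} (hinj : Set.InjOn f S)
    {x y u v : Xt} {P : H.Walk x y} {Q : H'.Walk (f x) (f y)}
    (he : Q.edges = P.edges.map (Sym2.map f)) (hsub : ∀ w ∈ P.support, w ∈ S)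
    (hu : u ∈ S) (hv : v ∈ S) :
    Q.toSubgraph.Adj (f u) (f v) ↔ P.toSubgraph.Adj u v := by
  rw [walk_tsa_iff, walk_tsa_iff, he, List.mem_map]
  constructor
  · rintro ⟨e, heP, heq⟩
    induction e using Sym2.ind with
    | _ p q =>
      rw [Sym2.map_pair_eq, Sym2.eq_iff] at heq
      have hpS := hsub p (P.fst_mem_support_of_mem_edges heP)
      have hqS := hsub q (P.snd_mem_support_of_mem_edges heP)
      rcases heq with ⟨h1, h2⟩ | ⟨h1, h2⟩
      · rwa [hinj hpS hu h1, hinj hqS hv h2] at heP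
      · rw [hinj hpS hv h1, hinj hqS hu h2] at heP
        rwa [Sym2.eq_swap]
  · intro h
    exact ⟨s(u, v), h, by rw [Sym2.map_pair_eq]⟩

lemma prism_map {S : Set Xt} {f : Xt → Yt} (hinj : Set.InjOn f S)
    (hadj : ∀ u ∈ S, ∀ v ∈ S, (H.Adj u v ↔ H'.Adj (f u) (f v)))
    (hp : IsPrismOn H S) : IsPrismOn H' (f '' S) := by
  obtain ⟨a₁, a₂, a₃, b₁, b₂, b₃, P₁, P₂, P₃, h1, h2, h3, n1, n2, n3, d12, d13, d23, hS, hiff⟩ := hp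
  have hsub1 : ∀ v ∈ P₁.support, v ∈ S := fun v hv => by rw [hS]; exact Or.inl hv
  have hsub2 : ∀ v ∈ P₂.support, v ∈ S := fun v hv => by rw [hS]; exact Or.inr (Or.inl hv)
  have hsub3 : ∀ v ∈ P₃.support, v ∈ S := fun v hv => by rw [hS]; exact Or.inr (Or.inr hv)
  have hf : ∀ u v, u ∈ S → v ∈ S → H.Adj u v → H'.Adj (f u) (f v) :=
    fun u v hu hv h => (hadj u hu v hv).mp h
  obtain ⟨Q₁, hL1, hsup1, he1⟩ := exists_lift f hf P₁ hsub1
  obtain ⟨Q₂, hL2, hsup2, he2⟩ := exists_lift f hf P₂ hsub2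
  obtain ⟨Q₃, hL3, hsup3, he3⟩ := exists_lift f hf P₃ hsub3
  have ha1 : a₁ ∈ S := hsub1 _ P₁.start_mem_support
  have ha2 : a₂ ∈ S := hsub2 _ P₂.start_mem_support
  have ha3 : a₃ ∈ S := hsub3 _ P₃.start_mem_support
  have hb1 : b₁ ∈ S := hsub1 _ P₁.end_mem_support
  have hb2 : b₂ ∈ S := hsub2 _ P₂.end_mem_support
  have hb3 : b₃ ∈ S := hsub3 _ P₃.end_mem_support
  refine ⟨f a₁, f a₂, f a₃, f b₁, f b₂, f b₃, Q₁, Q₂, Q₃, ?_, ?_, ?_, ?_, ?_, ?_, ?_, ?_, ?_, ?_, ?_⟩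
  · rw [Walk.isPath_def, hsup1]
    exact (h1.support_nodup).map_on (fun u hu v hv huv => hinj (hsub1 u hu) (hsub1 v hv) huv)
  · rw [Walk.isPath_def, hsup2]
    exact (h2.support_nodup).map_on (fun u hu v hv huv => hinj (hsub2 u hu) (hsub2 v hv) huv)
  · rw [Walk.isPath_def, hsup3]
    exact (h3.support_nodup).map_on (fun u hu v hv huv => hinj (hsub3 u hu) (hsub3 v hv) huv)
  · exact fun h => n1 (hinj ha1 hb1 h)
  · exact fun h => n2 (hinj ha2 hb2 h)
  · exact fun h => n3 (hinj ha3 hb3 h)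
  · intro u hu v hv
    rw [hsup1, List.mem_map] at hu
    rw [hsup2, List.mem_map] at hv
    obtain ⟨u₀, hu₀, rfl⟩ := hu; obtain ⟨v₀, hv₀, rfl⟩ := hv
    exact fun h => d12 u₀ hu₀ v₀ hv₀ (hinj (hsub1 _ hu₀) (hsub2 _ hv₀) h)
  · intro u hu v hv
    rw [hsup1, List.mem_map] at hu
    rw [hsup3, List.mem_map] at hv
    obtain ⟨u₀, hu₀, rfl⟩ := hu; obtain ⟨v₀, hv₀, rfl⟩ := hv
    exact fun h => d13 u₀ hu₀ v₀ hv₀ (hinj (hsub1 _ hu₀) (hsub3 _ hv₀) h)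
  · intro u hu v hv
    rw [hsup2, List.mem_map] at hu
    rw [hsup3, List.mem_map] at hv
    obtain ⟨u₀, hu₀, rfl⟩ := hu; obtain ⟨v₀, hv₀, rfl⟩ := hv
    exact fun h => d23 u₀ hu₀ v₀ hv₀ (hinj (hsub2 _ hu₀) (hsub3 _ hv₀) h)
  · ext w
    simp only [Set.mem_image, Set.mem_setOf_eq, hsup1, hsup2, hsup3, List.mem_map]
    constructor
    · rintro ⟨v, hvS, rfl⟩
      rw [hS] at hvS
      rcases hvS with h | h | h
      · exact Or.inl ⟨v, h, rfl⟩
      · exact Or.inr (Or.inl ⟨v, h, rfl⟩)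
      · exact Or.inr (Or.inr ⟨v, h, rfl⟩)
    · rintro (⟨v, hv, rfl⟩ | ⟨v, hv, rfl⟩ | ⟨v, hv, rfl⟩)
      · exact ⟨v, hsub1 v hv, rfl⟩
      · exact ⟨v, hsub2 v hv, rfl⟩
      · exact ⟨v, hsub3 v hv, rfl⟩
  · rintro u ⟨u₀, hu₀, rfl⟩ v ⟨v₀, hv₀, rfl⟩
    rw [← hadj u₀ hu₀ v₀ hv₀, hiff u₀ hu₀ v₀ hv₀,
      lifted_tsa hinj he1 hsub1 hu₀ hv₀, lifted_tsa hinj he2 hsub2 hu₀ hv₀,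
      lifted_tsa hinj he3 hsub3 hu₀ hv₀, cornAdj_iff, cornAdj_iff]
    have e1 := hinj.eq_iff hu₀ ha1
    have e2 := hinj.eq_iff hu₀ ha2
    have e3 := hinj.eq_iff hu₀ ha3
    have e4 := hinj.eq_iff hu₀ hb1
    have e5 := hinj.eq_iff hu₀ hb2
    have e6 := hinj.eq_iff hu₀ hb3
    have g1 := hinj.eq_iff hv₀ ha1
    have g2 := hinj.eq_iff hv₀ ha2
    have g3 := hinj.eq_iff hv₀ ha3
    have g4 := hinj.eq_iff hv₀ hb1
    have g5 := hinj.eq_iff hv₀ hb2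
    have g6 := hinj.eq_iff hv₀ hb3
    simp only [cornAdj, e1, e2, e3, e4, e5, e6, g1, g2, g3, g4, g5, g6]

end PrismMap

section Nav
variable {X : Type} {H : SimpleGraph X}

lemma walk_cons_decomp {x y : X} (p : H.Walk x y) (h : x ≠ y) :
    ∃ (w : X) (hadj : H.Adj x w) (q : H.Walk w y), p = Walk.cons hadj q := by
  cases p with
  | nil => exact absurd rfl h
  | cons hadj q => exact ⟨_, hadj, q, rfl⟩

lemma mem_support_reverse {x y v : X} (p : H.Walk x y) :
    v ∈ p.reverse.support ↔ v ∈ p.support := by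
  rw [Walk.support_reverse, List.mem_reverse]

lemma mem_edges_reverse {x y : X} (p : H.Walk x y) (e : Sym2 X) :
    e ∈ p.reverse.edges ↔ e ∈ p.edges := by
  rw [Walk.edges_reverse, List.mem_reverse]

lemma navCorner [DecidableEq X] {a₁ a₂ a₃ b₁ b₂ b₃ : X}
    {P₁ : H.Walk a₁ b₁} {P₂ : H.Walk a₂ b₂} {P₃ : H.Walk a₃ b₃}
    (h1 : P₁.IsPath)
    (n1 : a₁ ≠ b₁)
    (d12 : ∀ u ∈ P₁.support, ∀ v ∈ P₂.support, u ≠ v)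
    (d13 : ∀ u ∈ P₁.support, ∀ v ∈ P₃.support, u ≠ v)
    (d23 : ∀ u ∈ P₂.support, ∀ v ∈ P₃.support, u ≠ v)
    {S : Set X} (hS : ∀ v, v ∈ S ↔ (v ∈ P₁.support ∨ v ∈ P₂.support ∨ v ∈ P₃.support))
    (hfwd : ∀ v ∈ S, H.Adj a₁ v → (P₁.toSubgraph.Adj a₁ v ∨ P₂.toSubgraph.Adj a₁ v ∨
      P₃.toSubgraph.Adj a₁ v ∨ cornAdj a₁ a₂ a₃ b₁ b₂ b₃ a₁ v))
    (hbwd : ∀ u v, cornAdj a₁ a₂ a₃ b₁ b₂ b₃ u v → H.Adj u v)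
    {α β : X} (hα : H.Adj a₁ α) (hβ : H.Adj a₁ β) (hαS : α ∈ S) (hβS : β ∈ S)
    (hαβ : α ≠ β) (hnadj : ¬ H.Adj α β) :
    ∃ W : H.Walk α β, ∀ v ∈ W.support, v ∈ S ∧ v ≠ a₁ ∧ (¬H.Adj a₁ v ∨ v = α ∨ v = β) := by
  obtain ⟨w, h₀, q₀, hP⟩ := walk_cons_decomp P₁ n1
  have ha1P1 : a₁ ∈ P₁.support := P₁.start_mem_support
  have hb1P1 : b₁ ∈ P₁.support := P₁.end_mem_support
  have ha2P2 : a₂ ∈ P₂.support := P₂.start_mem_support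
  have hb2P2 : b₂ ∈ P₂.support := P₂.end_mem_support
  have ha3P3 : a₃ ∈ P₃.support := P₃.start_mem_support
  have hb3P3 : b₃ ∈ P₃.support := P₃.end_mem_support
  have hq₀P1 : ∀ v ∈ q₀.support, v ∈ P₁.support := by
    intro v hv; rw [hP, Walk.support_cons]; exact List.mem_cons_of_mem _ hv
  have ha1q₀ : a₁ ∉ q₀.support := by
    have := h1; rw [hP, Walk.cons_isPath_iff] at this; exact this.2
  have hew : s(a₁, w) ∈ P₁.edges := by rw [hP, Walk.edges_cons]; exact List.mem_cons_self
  -- M-analysis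
  have key : ∀ v ∈ S, H.Adj a₁ v → v = w ∨ v = a₂ ∨ v = a₃ := by
    intro v hvS hadj
    rcases hfwd v hvS hadj with hc | hc | hc | hc
    · left
      exact (walk_endpoint_unique h1 hew ((walk_tsa_iff P₁).mp hc)).symm
    · exact absurd ((walk_tsa_iff P₂).mp hc) (fun hcc =>
        d12 a₁ ha1P1 a₁ (P₂.fst_mem_support_of_mem_edges hcc) rfl)
    · exact absurd ((walk_tsa_iff P₃).mp hc) (fun hcc =>
        d13 a₁ ha1P1 a₁ (P₃.fst_mem_support_of_mem_edges hcc) rfl)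
    · rcases hc with (⟨-, hv⟩ | ⟨he, -⟩) | (⟨-, hv⟩ | ⟨he, -⟩) | (⟨he, -⟩ | ⟨he, -⟩) |
        (⟨he, -⟩ | ⟨he, -⟩) | (⟨he, -⟩ | ⟨he, -⟩) | (⟨he, -⟩ | ⟨he, -⟩)
      · exact Or.inr (Or.inl hv)
      · exact absurd he (d12 a₁ ha1P1 a₂ ha2P2)
      · exact Or.inr (Or.inr hv)
      · exact absurd he (d13 a₁ ha1P1 a₃ ha3P3)
      · exact absurd he (d12 a₁ ha1P1 a₂ ha2P2)
      · exact absurd he (d13 a₁ ha1P1 a₃ ha3P3)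
      · exact absurd he n1
      · exact absurd he (d12 a₁ ha1P1 b₂ hb2P2)
      · exact absurd he n1
      · exact absurd he (d13 a₁ ha1P1 b₃ hb3P3)
      · exact absurd he (d12 a₁ ha1P1 b₂ hb2P2)
      · exact absurd he (d13 a₁ ha1P1 b₃ hb3P3)
  -- route to a₂
  have route2 : ∃ W : H.Walk w a₂, ∀ v ∈ W.support,
      v ∈ S ∧ v ≠ a₁ ∧ (¬H.Adj a₁ v ∨ v = w ∨ v = a₂) := by
    refine ⟨q₀.append (Walk.cons (hbwd b₁ b₂ (Or.inr (Or.inr (Or.inr (Or.inl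
      (Or.inl ⟨rfl, rfl⟩)))))) P₂.reverse), ?_⟩
    intro v hv
    rw [Walk.mem_support_append_iff, Walk.support_cons, List.mem_cons] at hv
    have hvS : v ∈ S := by
      rcases hv with hv | hv | hv
      · exact (hS v).mpr (Or.inl (hq₀P1 v hv))
      · exact (hS v).mpr (Or.inl (hv ▸ hb1P1))
      · exact (hS v).mpr (Or.inr (Or.inl ((mem_support_reverse P₂).mp hv)))
    refine ⟨hvS, ?_, ?_⟩
    · rcases hv with hv | hv | hv
      · exact fun hh => ha1q₀ (hh ▸ hv)
      · exact hv ▸ n1.symm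
      · exact (d12 a₁ ha1P1 v ((mem_support_reverse P₂).mp hv)).symm
    · by_cases hadj : H.Adj a₁ v
      · rcases key v hvS hadj with h' | h' | h'
        · exact Or.inr (Or.inl h')
        · exact Or.inr (Or.inr h')
        · exfalso
          rcases hv with hv | hv | hv
          · exact d13 v (hq₀P1 _ hv) a₃ ha3P3 h'
          · exact d13 v (hv ▸ hb1P1) a₃ ha3P3 h'
          · exact d23 v ((mem_support_reverse P₂).mp hv) a₃ ha3P3 h'
      · exact Or.inl hadj
  -- route to a₃
  have route3 : ∃ W : H.Walk w a₃, ∀ v ∈ W.support,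
      v ∈ S ∧ v ≠ a₁ ∧ (¬H.Adj a₁ v ∨ v = w ∨ v = a₃) := by
    refine ⟨q₀.append (Walk.cons (hbwd b₁ b₃ (Or.inr (Or.inr (Or.inr (Or.inr (Or.inl
      (Or.inl ⟨rfl, rfl⟩))))))) P₃.reverse), ?_⟩
    intro v hv
    rw [Walk.mem_support_append_iff, Walk.support_cons, List.mem_cons] at hv
    have hvS : v ∈ S := by
      rcases hv with hv | hv | hv
      · exact (hS v).mpr (Or.inl (hq₀P1 v hv))
      · exact (hS v).mpr (Or.inl (hv ▸ hb1P1))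
      · exact (hS v).mpr (Or.inr (Or.inr ((mem_support_reverse P₃).mp hv)))
    refine ⟨hvS, ?_, ?_⟩
    · rcases hv with hv | hv | hv
      · exact fun hh => ha1q₀ (hh ▸ hv)
      · exact hv ▸ n1.symm
      · exact (d13 a₁ ha1P1 v ((mem_support_reverse P₃).mp hv)).symm
    · by_cases hadj : H.Adj a₁ v
      · rcases key v hvS hadj with h' | h' | h'
        · exact Or.inr (Or.inl h')
        · exfalso
          rcases hv with hv | hv | hv
          · exact d12 v (hq₀P1 _ hv) a₂ ha2P2 h'
          · exact d12 v (hv ▸ hb1P1) a₂ ha2P2 h'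
          · exact d23 a₂ ha2P2 v ((mem_support_reverse P₃).mp hv) h'.symm
        · exact Or.inr (Or.inr h')
      · exact Or.inl hadj
  have hadj23 : H.Adj a₂ a₃ := hbwd a₂ a₃ (Or.inr (Or.inr (Or.inl (Or.inl ⟨rfl, rfl⟩))))
  rcases key α hαS hα with rfl | rfl | rfl <;> rcases key β hβS hβ with rfl | rfl | rfl
  · exact absurd rfl hαβ
  · obtain ⟨W, hW⟩ := route2
    exact ⟨W, fun v hv => ⟨(hW v hv).1, (hW v hv).2.1, (hW v hv).2.2⟩⟩
  · obtain ⟨W, hW⟩ := route3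
    exact ⟨W, fun v hv => ⟨(hW v hv).1, (hW v hv).2.1, (hW v hv).2.2⟩⟩
  · obtain ⟨W, hW⟩ := route2
    refine ⟨W.reverse, fun v hv => ?_⟩
    have hv' := (mem_support_reverse W).mp hv
    refine ⟨(hW v hv').1, (hW v hv').2.1, ?_⟩
    rcases (hW v hv').2.2 with h | h | h
    · exact Or.inl h
    · exact Or.inr (Or.inr h)
    · exact Or.inr (Or.inl h)
  · exact absurd rfl hαβ
  · exact absurd hadj23 hnadj
  · obtain ⟨W, hW⟩ := route3
    refine ⟨W.reverse, fun v hv => ?_⟩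
    have hv' := (mem_support_reverse W).mp hv
    refine ⟨(hW v hv').1, (hW v hv').2.1, ?_⟩
    rcases (hW v hv').2.2 with h | h | h
    · exact Or.inl h
    · exact Or.inr (Or.inr h)
    · exact Or.inr (Or.inl h)
  · exact absurd hadj23.symm hnadj
  · exact absurd rfl hαβ

lemma navInterior [DecidableEq X] {a₁ a₂ a₃ b₁ b₂ b₃ : X}
    {P₁ : H.Walk a₁ b₁} {P₂ : H.Walk a₂ b₂} {P₃ : H.Walk a₃ b₃}
    (h1 : P₁.IsPath)
    (d12 : ∀ u ∈ P₁.support, ∀ v ∈ P₂.support, u ≠ v)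
    (d13 : ∀ u ∈ P₁.support, ∀ v ∈ P₃.support, u ≠ v)
    {S : Set X} (hS : ∀ v, v ∈ S ↔ (v ∈ P₁.support ∨ v ∈ P₂.support ∨ v ∈ P₃.support))
    {c : X} (hc : c ∈ P₁.support) (hca : c ≠ a₁) (hcb : c ≠ b₁)
    (hfwd : ∀ v ∈ S, H.Adj c v → (P₁.toSubgraph.Adj c v ∨ P₂.toSubgraph.Adj c v ∨
      P₃.toSubgraph.Adj c v ∨ cornAdj a₁ a₂ a₃ b₁ b₂ b₃ c v))
    (hbwd : ∀ u v, cornAdj a₁ a₂ a₃ b₁ b₂ b₃ u v → H.Adj u v)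
    {α β : X} (hα : H.Adj c α) (hβ : H.Adj c β) (hαS : α ∈ S) (hβS : β ∈ S)
    (hαβ : α ≠ β) :
    ∃ W : H.Walk α β, ∀ v ∈ W.support, v ∈ S ∧ v ≠ c ∧ (¬H.Adj c v ∨ v = α ∨ v = β) := by
  have ha1P1 : a₁ ∈ P₁.support := P₁.start_mem_support
  have hb1P1 : b₁ ∈ P₁.support := P₁.end_mem_support
  have ha2P2 : a₂ ∈ P₂.support := P₂.start_mem_support
  have hb2P2 : b₂ ∈ P₂.support := P₂.end_mem_support
  have ha3P3 : a₃ ∈ P₃.support := P₃.start_mem_support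
  have hb3P3 : b₃ ∈ P₃.support := P₃.end_mem_support
  set d₁ := P₁.takeUntil c hc with hd₁
  set d₂ := P₁.dropUntil c hc with hd₂
  have hd₁p : d₁.reverse.IsPath := (h1.takeUntil hc).reverse
  have hd₂p : d₂.IsPath := h1.dropUntil hc
  have key : ∀ v ∈ S, H.Adj c v → s(c, v) ∈ d₁.reverse.edges ∨ s(c, v) ∈ d₂.edges := by
    intro v hvS hadj
    rcases hfwd v hvS hadj with hcc | hcc | hcc | hcc
    · have := (walk_tsa_iff P₁).mp hcc
      rw [← P₁.take_spec hc, Walk.edges_append, List.mem_append] at this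
      rcases this with h | h
      · exact Or.inl ((mem_edges_reverse d₁ _).mpr h)
      · exact Or.inr h
    · exact absurd ((walk_tsa_iff P₂).mp hcc) (fun hcc' =>
        d12 c hc c (P₂.fst_mem_support_of_mem_edges hcc') rfl)
    · exact absurd ((walk_tsa_iff P₃).mp hcc) (fun hcc' =>
        d13 c hc c (P₃.fst_mem_support_of_mem_edges hcc') rfl)
    · exfalso
      rcases hcc with (⟨he, -⟩ | ⟨he, -⟩) | (⟨he, -⟩ | ⟨he, -⟩) | (⟨he, -⟩ | ⟨he, -⟩) |
        (⟨he, -⟩ | ⟨he, -⟩) | (⟨he, -⟩ | ⟨he, -⟩) | (⟨he, -⟩ | ⟨he, -⟩)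
      · exact hca he
      · exact d12 c hc a₂ ha2P2 he
      · exact hca he
      · exact d13 c hc a₃ ha3P3 he
      · exact d12 c hc a₂ ha2P2 he
      · exact d13 c hc a₃ ha3P3 he
      · exact hcb he
      · exact d12 c hc b₂ hb2P2 he
      · exact hcb he
      · exact d13 c hc b₃ hb3P3 he
      · exact d12 c hc b₂ hb2P2 he
      · exact d13 c hc b₃ hb3P3 he
  have hq₁sub : ∀ v ∈ d₁.reverse.support, v ∈ P₁.support := fun v hv =>
    P₁.support_takeUntil_subset hc ((mem_support_reverse d₁).mp hv)
  have hq₂sub : ∀ v ∈ d₂.support, v ∈ P₁.support := fun v hv =>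
    P₁.support_dropUntil_subset hc hv
  -- core construction
  have core : ∀ γ δ : X, γ ∈ S → δ ∈ S → s(c, γ) ∈ d₁.reverse.edges → s(c, δ) ∈ d₂.edges →
      ∃ W : H.Walk γ δ, ∀ v ∈ W.support, v ∈ S ∧ v ≠ c ∧ (¬H.Adj c v ∨ v = γ ∨ v = δ) := by
    intro γ δ hγS hδS eγ eδ
    obtain ⟨hcγ, q₁, hq₁⟩ := walk_endpoint_edge hd₁p eγ
    obtain ⟨hcδ, q₂, hq₂⟩ := walk_endpoint_edge hd₂p eδ
    have hcq₁ : c ∉ q₁.support := by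
      have := hd₁p; rw [hq₁, Walk.cons_isPath_iff] at this; exact this.2
    have hcq₂ : c ∉ q₂.support := by
      have := hd₂p; rw [hq₂, Walk.cons_isPath_iff] at this; exact this.2
    have hq₁sub' : ∀ v ∈ q₁.support, v ∈ P₁.support := by
      intro v hv; exact hq₁sub v (by rw [hq₁, Walk.support_cons]; exact List.mem_cons_of_mem _ hv)
    have hq₂sub' : ∀ v ∈ q₂.support, v ∈ P₁.support := by
      intro v hv; exact hq₂sub v (by rw [hq₂, Walk.support_cons]; exact List.mem_cons_of_mem _ hv)
    refine ⟨q₁.append (Walk.cons (hbwd a₁ a₂ (Or.inl (Or.inl ⟨rfl, rfl⟩)))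
      (P₂.append (Walk.cons (hbwd b₂ b₁ (Or.inr (Or.inr (Or.inr (Or.inl
        (Or.inr ⟨rfl, rfl⟩)))))) q₂.reverse))), ?_⟩
    intro v hv
    rw [Walk.mem_support_append_iff, Walk.support_cons, List.mem_cons,
      Walk.mem_support_append_iff, Walk.support_cons, List.mem_cons] at hv
    have hvS : v ∈ S := by
      rcases hv with hv | hv | hv | hv | hv
      · exact (hS v).mpr (Or.inl (hq₁sub' v hv))
      · exact (hS v).mpr (Or.inl (hv ▸ ha1P1))
      · exact (hS v).mpr (Or.inr (Or.inl hv))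
      · exact (hS v).mpr (Or.inr (Or.inl (hv ▸ hb2P2)))
      · exact (hS v).mpr (Or.inl (hq₂sub' v ((mem_support_reverse q₂).mp hv)))
    refine ⟨hvS, ?_, ?_⟩
    · rcases hv with hv | hv | hv | hv | hv
      · exact fun hh => hcq₁ (hh ▸ hv)
      · exact hv ▸ (Ne.symm hca)
      · exact (d12 c hc v hv).symm
      · exact hv ▸ (d12 c hc b₂ hb2P2).symm
      · exact fun hh => hcq₂ (hh ▸ (mem_support_reverse q₂).mp hv)
    · by_cases hadj : H.Adj c v
      · rcases key v hvS hadj with h | h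
        · exact Or.inr (Or.inl (walk_endpoint_unique hd₁p eγ h).symm)
        · exact Or.inr (Or.inr (walk_endpoint_unique hd₂p eδ h).symm)
      · exact Or.inl hadj
  rcases key α hαS hα with eα | eα <;> rcases key β hβS hβ with eβ | eβ
  · exact absurd (walk_endpoint_unique hd₁p eα eβ) hαβ
  · exact core α β hαS hβS eα eβ
  · obtain ⟨W, hW⟩ := core β α hβS hαS eβ eα
    refine ⟨W.reverse, fun v hv => ?_⟩
    have hv' := (mem_support_reverse W).mp hv
    refine ⟨(hW v hv').1, (hW v hv').2.1, ?_⟩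
    rcases (hW v hv').2.2 with h | h | h
    · exact Or.inl h
    · exact Or.inr (Or.inr h)
    · exact Or.inr (Or.inl h)
  · exact absurd (walk_endpoint_unique hd₂p eα eβ) hαβ


lemma nav1 [DecidableEq X] {a₁ a₂ a₃ b₁ b₂ b₃ : X}
    {P₁ : H.Walk a₁ b₁} {P₂ : H.Walk a₂ b₂} {P₃ : H.Walk a₃ b₃}
    (h1 : P₁.IsPath) (n1 : a₁ ≠ b₁)
    (d12 : ∀ u ∈ P₁.support, ∀ v ∈ P₂.support, u ≠ v)
    (d13 : ∀ u ∈ P₁.support, ∀ v ∈ P₃.support, u ≠ v)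
    (d23 : ∀ u ∈ P₂.support, ∀ v ∈ P₃.support, u ≠ v)
    {S : Set X} (hS : ∀ v, v ∈ S ↔ (v ∈ P₁.support ∨ v ∈ P₂.support ∨ v ∈ P₃.support))
    {c : X} (hc : c ∈ P₁.support)
    (hfwd : ∀ v ∈ S, H.Adj c v → (P₁.toSubgraph.Adj c v ∨ P₂.toSubgraph.Adj c v ∨
      P₃.toSubgraph.Adj c v ∨ cornAdj a₁ a₂ a₃ b₁ b₂ b₃ c v))
    (hbwd : ∀ u v, cornAdj a₁ a₂ a₃ b₁ b₂ b₃ u v → H.Adj u v)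
    {α β : X} (hα : H.Adj c α) (hβ : H.Adj c β) (hαS : α ∈ S) (hβS : β ∈ S) (hαβ : α ≠ β) :
    ∃ W : H.Walk α β, ∀ v ∈ W.support, v ∈ S ∧ v ≠ c ∧ (¬H.Adj c v ∨ v = α ∨ v = β) := by
  by_cases hadjαβ : H.Adj α β
  · refine ⟨Walk.cons hadjαβ Walk.nil, ?_⟩
    intro v hv
    rw [Walk.support_cons, Walk.support_nil, List.mem_cons, List.mem_singleton] at hv
    rcases hv with rfl | rfl
    · exact ⟨hαS, hα.ne', Or.inr (Or.inl rfl)⟩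
    · exact ⟨hβS, hβ.ne', Or.inr (Or.inr rfl)⟩
  · by_cases hca : c = a₁
    · subst hca
      exact navCorner h1 n1 d12 d13 d23 hS hfwd hbwd hα hβ hαS hβS hαβ hadjαβ
    · by_cases hcb : c = b₁
      · subst hcb
        have d12' : ∀ u ∈ P₁.reverse.support, ∀ v ∈ P₂.reverse.support, u ≠ v :=
          fun u hu v hv => d12 u ((mem_support_reverse P₁).mp hu) v ((mem_support_reverse P₂).mp hv)
        have d13' : ∀ u ∈ P₁.reverse.support, ∀ v ∈ P₃.reverse.support, u ≠ v :=
          fun u hu v hv => d13 u ((mem_support_reverse P₁).mp hu) v ((mem_support_reverse P₃).mp hv)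
        have d23' : ∀ u ∈ P₂.reverse.support, ∀ v ∈ P₃.reverse.support, u ≠ v :=
          fun u hu v hv => d23 u ((mem_support_reverse P₂).mp hu) v ((mem_support_reverse P₃).mp hv)
        have hS' : ∀ v, v ∈ S ↔ (v ∈ P₁.reverse.support ∨ v ∈ P₂.reverse.support ∨
            v ∈ P₃.reverse.support) := by
          intro v
          rw [mem_support_reverse, mem_support_reverse, mem_support_reverse]
          exact hS v
        have hfwd' : ∀ v ∈ S, H.Adj c v → (P₁.reverse.toSubgraph.Adj c v ∨
            P₂.reverse.toSubgraph.Adj c v ∨ P₃.reverse.toSubgraph.Adj c v ∨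
            cornAdj c b₂ b₃ a₁ a₂ a₃ c v) := by
          intro v hv h
          rw [Walk.toSubgraph_reverse, Walk.toSubgraph_reverse, Walk.toSubgraph_reverse]
          rcases hfwd v hv h with h' | h' | h' | h'
          · exact Or.inl h'
          · exact Or.inr (Or.inl h')
          · exact Or.inr (Or.inr (Or.inl h'))
          · exact Or.inr (Or.inr (Or.inr ((cornAdj_swap a₁ a₂ a₃ c b₂ b₃ c v).mp h')))
        have hbwd' : ∀ u v, cornAdj c b₂ b₃ a₁ a₂ a₃ u v → H.Adj u v :=
          fun u v h => hbwd u v ((cornAdj_swap a₁ a₂ a₃ c b₂ b₃ u v).mpr h)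
        exact navCorner h1.reverse n1.symm d12' d13' d23' hS' hfwd' hbwd'
          hα hβ hαS hβS hαβ hadjαβ
      · exact navInterior h1 d12 d13 hS hc hca hcb hfwd hbwd hα hβ hαS hβS hαβ

end Nav

section OuterPathLemmas

variable {V : Type} {G : SimpleGraph V} {T : Set V}

lemma path_through_t {x y : V} {p : G.Walk x y}
    (hp : IsChordless G p) {t : V} (ht : t ∈ p.support)
    (hxt : G.Adj x t) (hty : G.Adj t y) (hxy : x ≠ y) : p.length = 2 := by
  have e1 : s(x, t) ∈ p.edges := chordless_edges hp p.start_mem_support ht hxt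
  have e2 : s(t, y) ∈ p.edges := chordless_edges hp ht p.end_mem_support hty
  obtain ⟨h, q, rfl⟩ := walk_endpoint_edge hp.1 e1
  rw [Walk.edges_cons, List.mem_cons] at e2
  rcases e2 with h' | h'
  · rw [Sym2.eq_iff] at h'
    rcases h' with ⟨htx, -⟩ | ⟨-, hyx⟩
    · exact absurd htx.symm hxt.ne
    · exact absurd hyx hxy.symm
  · obtain ⟨h2, r, rfl⟩ := walk_endpoint_edge hp.1.of_cons h'
    have hr : r = Walk.nil := path_loop_nil hp.1.of_cons.of_cons
    subst hr
    simp

lemma no_T_free_path (hno : ¬ ∃ (x : V) (y : V) (p : G.Walk x y), IsOuterPath G T p) :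
    ∀ (n : ℕ) {x y : V} (p : G.Walk x y), p.length ≤ n → IsChordless G p → x ∈ Cset G T →
      y ∈ Cset G T → x ≠ y → (∀ v ∈ p.support, v ∉ T) → False := by
  classical
  intro n
  induction n using Nat.strong_induction_on with
  | _ n ih =>
    intro x y p hlen hp hx hy hxy hT
    by_cases hint : ∀ v ∈ p.support, v ≠ x → v ≠ y → v ∉ Cset G T
    · refine hno ⟨x, y, p, hxy, hp, hx, hy, fun v hv hvx hvy hmem => ?_⟩
      rcases hmem with hmem | hmem
      · exact hT v hv hmem
      · exact hint v hv hvx hvy hmem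
    · push_neg at hint
      obtain ⟨v₀, hv₀, hvx, hvy, hvC⟩ := hint
      have hlt : (p.takeUntil v₀ hv₀).length < p.length := by
        have hls := congr_arg Walk.length (p.take_spec hv₀)
        rw [Walk.length_append] at hls
        have h1 : 1 ≤ (p.dropUntil v₀ hv₀).length := walk_length_pos_of_ne _ hvy
        omega
      exact ih (p.takeUntil v₀ hv₀).length (by omega) (p.takeUntil v₀ hv₀) le_rfl
        (chordless_takeUntil hp hv₀) hx hvC (Ne.symm hvx)
        (fun v hv => hT v (p.support_takeUntil_subset hv₀ hv))

end OuterPathLemmas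

/-- Let `G ∈ 𝒜` contain an interesting set and let `T` be a maximal interesting set.
If there is no `T`-outer path, then every special even pair of `G[C(T)]` is a special
even pair of `G`. -/
theorem special_even_pair_of_no_outer_path
    {V : Type} [Fintype V] (G : SimpleGraph V) (hG : InArtemis G)
    (hex : ∃ T₀ : Set V, IsInteresting G T₀)
    (T : Set V) (hT : IsMaximalInteresting G T)
    (hno : ¬ ∃ (x y : V) (p : G.Walk x y), IsOuterPath G T p)
    (a b : ↥(Cset G T))
    (hab : IsSpecialEvenPair (G.induce (Cset G T)) a b) :
    IsSpecialEvenPair G ↑a ↑b := by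
  classical
  obtain ⟨⟨hne, hnadj, -⟩, -⟩ := hab
  have hvne : (a : V) ≠ (b : V) := fun h => hne (Subtype.ext h)
  have hGnadj : ¬ G.Adj ↑a ↑b := fun h => hnadj h
  have haC : (a : V) ∈ Cset G T := a.2
  have hbC : (b : V) ∈ Cset G T := b.2
  have haT : (a : V) ∉ T := haC.1
  have hbT : (b : V) ∉ T := hbC.1
  have F2 : ∀ (p : G.Walk ↑a ↑b), IsChordless G p → (∀ v ∈ p.support, v ∉ T) → False :=
    fun p hp hT' => no_T_free_path hno p.length p le_rfl hp haC hbC hvne hT'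
  constructor
  · refine ⟨hvne, hGnadj, ?_⟩
    intro p hp
    by_cases hTp : ∃ t ∈ p.support, t ∈ T
    · obtain ⟨t, htp, htT⟩ := hTp
      have h1 : G.Adj ↑a t := haC.2 t htT
      have h2 : G.Adj t ↑b := (hbC.2 t htT).symm
      rw [path_through_t hp htp h1 h2 hvne]
      exact even_two
    · push_neg at hTp
      exact absurd (F2 p hp hTp) not_false
  · rintro ⟨S, hpr⟩
    set G' := contract G ↑a ↑b with hG'def
    set c : {z : V // z ≠ ↑b} := ⟨↑a, hvne⟩ with hcdef
    have adjG'_of : ∀ (u v : {z : V // z ≠ ↑b}), u ≠ c → v ≠ c → G'.Adj u v → G.Adj u.1 v.1 := by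
      intro u v hu hv h
      rcases h.2 with h' | ⟨h', -⟩ | ⟨h', -⟩
      · exact h'
      · exact absurd (Subtype.ext h') hu
      · exact absurd (Subtype.ext h') hv
    have adjG'_mk : ∀ (u v : {z : V // z ≠ ↑b}), G.Adj u.1 v.1 → G'.Adj u v :=
      fun u v h => ⟨fun hh => G.irrefl (hh ▸ h), Or.inl h⟩
    have adjca : ∀ v : {z : V // z ≠ ↑b}, G.Adj ↑a v.1 → G'.Adj c v := by
      intro v h
      refine ⟨fun hh => ?_, Or.inl h⟩
      rw [← hh] at h
      exact G.irrefl h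
    have adjcb : ∀ v : {z : V // z ≠ ↑b}, G.Adj ↑b v.1 → G'.Adj c v := by
      intro v h
      refine ⟨fun hh => ?_, Or.inr (Or.inl ⟨rfl, h⟩)⟩
      rw [← hh] at h
      exact hGnadj h.symm
    by_cases hcS : c ∈ S
    · by_cases hNA : ∀ v ∈ S, G'.Adj c v → G.Adj ↑a v.1
      · refine hG.2.2 ⟨Subtype.val '' S, prism_map (Subtype.val_injective.injOn) ?_ hpr⟩
        intro u hu v hv
        constructor
        · intro h
          rcases h.2 with h' | ⟨h', -⟩ | ⟨h', -⟩
          · exact h'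
          · have huc : u = c := Subtype.ext h'
            rw [h']
            exact hNA v hv (huc ▸ h)
          · have hvc : v = c := Subtype.ext h'
            rw [h']
            exact (hNA u hu (hvc ▸ h.symm)).symm
        · exact adjG'_mk u v
      · by_cases hNB : ∀ v ∈ S, G'.Adj c v → G.Adj ↑b v.1
        · set f : {z : V // z ≠ ↑b} → V := fun u => if u = c then (↑b : V) else u.1 with hfdef
          have hinj : Set.InjOn f S := by
            intro u hu v hv huv
            by_cases h1 : u = c <;> by_cases h2 : v = c
            · rw [h1, h2]
            · rw [hfdef] at huv; simp only [h1, h2, if_pos, if_neg, if_true] at huv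
              exact absurd huv.symm v.2
            · rw [hfdef] at huv; simp only [h1, h2, if_neg, if_true] at huv
              exact absurd huv u.2
            · rw [hfdef] at huv; simp only [h1, h2, if_neg] at huv
              exact Subtype.ext huv
          refine hG.2.2 ⟨f '' S, prism_map hinj ?_ hpr⟩
          intro u hu v hv
          by_cases h1 : u = c <;> by_cases h2 : v = c
          · subst h1; subst h2
            simp only [hfdef, if_pos]
            exact iff_of_false (G'.irrefl) (G.irrefl)
          · subst h1
            have hfu : f c = (↑b : V) := by simp [hfdef]
            have hfv : f v = v.1 := by simp [hfdef, h2]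
            rw [hfu, hfv]
            exact ⟨fun h => hNB v hv h, fun h => adjcb v h⟩
          · subst h2
            have hfv : f c = (↑b : V) := by simp [hfdef]
            have hfu : f u = u.1 := by simp [hfdef, h1]
            rw [hfu, hfv]
            exact ⟨fun h => (hNB u hu h.symm).symm, fun h => (adjcb u h.symm).symm⟩
          · have hfu : f u = u.1 := by simp [hfdef, h1]
            have hfv : f v = v.1 := by simp [hfdef, h2]
            rw [hfu, hfv]
            exact ⟨fun h => adjG'_of u v h1 h2 h, fun h => adjG'_mk u v h⟩
        · -- the hard case
          push_neg at hNA hNB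
          obtain ⟨β, hβS, hcβ, hβa⟩ := hNA
          obtain ⟨α, hαS, hcα, hαb⟩ := hNB
          have hαa : G.Adj ↑a α.1 := by
            rcases hcα.2 with h' | ⟨-, h'⟩ | ⟨h', -⟩
            · exact h'
            · exact absurd h' hαb
            · exact absurd (Subtype.ext h') hcα.ne'
          have hβb : G.Adj ↑b β.1 := by
            rcases hcβ.2 with h' | ⟨-, h'⟩ | ⟨h', -⟩
            · exact absurd h' hβa
            · exact h'
            · exact absurd (Subtype.ext h') hcβ.ne'
          have hαβ : α ≠ β := fun h => hβa (h ▸ hαa)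
          obtain ⟨a₁, a₂, a₃, b₁, b₂, b₃, P₁, P₂, P₃, h1, h2, h3, n1, n2, n3, d12, d13, d23,
            hSeq, hiff⟩ := hpr
          have hS' : ∀ v, v ∈ S ↔ (v ∈ P₁.support ∨ v ∈ P₂.support ∨ v ∈ P₃.support) :=
            fun v => Set.ext_iff.mp hSeq v
          have ha1S : a₁ ∈ S := (hS' a₁).mpr (Or.inl P₁.start_mem_support)
          have hb1S : b₁ ∈ S := (hS' b₁).mpr (Or.inl P₁.end_mem_support)
          have ha2S : a₂ ∈ S := (hS' a₂).mpr (Or.inr (Or.inl P₂.start_mem_support))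
          have hb2S : b₂ ∈ S := (hS' b₂).mpr (Or.inr (Or.inl P₂.end_mem_support))
          have ha3S : a₃ ∈ S := (hS' a₃).mpr (Or.inr (Or.inr P₃.start_mem_support))
          have hb3S : b₃ ∈ S := (hS' b₃).mpr (Or.inr (Or.inr P₃.end_mem_support))
          have hbwd0 : ∀ u v, cornAdj a₁ a₂ a₃ b₁ b₂ b₃ u v → G'.Adj u v := by
            intro u v h
            have hm : u ∈ S ∧ v ∈ S := by
              rcases h with (⟨rfl, rfl⟩ | ⟨rfl, rfl⟩) | (⟨rfl, rfl⟩ | ⟨rfl, rfl⟩) |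
                (⟨rfl, rfl⟩ | ⟨rfl, rfl⟩) | (⟨rfl, rfl⟩ | ⟨rfl, rfl⟩) |
                (⟨rfl, rfl⟩ | ⟨rfl, rfl⟩) | (⟨rfl, rfl⟩ | ⟨rfl, rfl⟩)
              · exact ⟨ha1S, ha2S⟩
              · exact ⟨ha2S, ha1S⟩
              · exact ⟨ha1S, ha3S⟩
              · exact ⟨ha3S, ha1S⟩
              · exact ⟨ha2S, ha3S⟩
              · exact ⟨ha3S, ha2S⟩
              · exact ⟨hb1S, hb2S⟩
              · exact ⟨hb2S, hb1S⟩
              · exact ⟨hb1S, hb3S⟩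
              · exact ⟨hb3S, hb1S⟩
              · exact ⟨hb2S, hb3S⟩
              · exact ⟨hb3S, hb2S⟩
            exact (hiff u hm.1 v hm.2).mpr (Or.inr (Or.inr (Or.inr
              ((cornAdj_iff a₁ a₂ a₃ b₁ b₂ b₃ u v).mpr h))))
          have hfwd1 : ∀ v ∈ S, G'.Adj c v → (P₁.toSubgraph.Adj c v ∨ P₂.toSubgraph.Adj c v ∨
              P₃.toSubgraph.Adj c v ∨ cornAdj a₁ a₂ a₃ b₁ b₂ b₃ c v) := by
            intro v hv h
            rcases (hiff c hcS v hv).mp h with h' | h' | h' | h'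
            · exact Or.inl h'
            · exact Or.inr (Or.inl h')
            · exact Or.inr (Or.inr (Or.inl h'))
            · exact Or.inr (Or.inr (Or.inr ((cornAdj_iff a₁ a₂ a₃ b₁ b₂ b₃ c v).mp h')))
          obtain ⟨W₀, hW₀⟩ : ∃ W : G'.Walk α β, ∀ v ∈ W.support,
              v ∈ S ∧ v ≠ c ∧ (¬G'.Adj c v ∨ v = α ∨ v = β) := by
            rcases (hS' c).mp hcS with hc1 | hc2 | hc3
            · exact nav1 h1 n1 d12 d13 d23 hS' hc1 hfwd1 hbwd0 hcα hcβ hαS hβS hαβ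
            · have hfwd2 : ∀ v ∈ S, G'.Adj c v → (P₂.toSubgraph.Adj c v ∨
                  P₁.toSubgraph.Adj c v ∨ P₃.toSubgraph.Adj c v ∨
                  cornAdj a₂ a₁ a₃ b₂ b₁ b₃ c v) := by
                intro v hv hh
                rcases hfwd1 v hv hh with h' | h' | h' | h'
                · exact Or.inr (Or.inl h')
                · exact Or.inl h'
                · exact Or.inr (Or.inr (Or.inl h'))
                · exact Or.inr (Or.inr (Or.inr
                    ((cornAdj_perm12 a₁ a₂ a₃ b₁ b₂ b₃ c v).mp h')))
              have hbwd2 : ∀ u v, cornAdj a₂ a₁ a₃ b₂ b₁ b₃ u v → G'.Adj u v :=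
                fun u v hh => hbwd0 u v ((cornAdj_perm12 a₁ a₂ a₃ b₁ b₂ b₃ u v).mpr hh)
              have hS2 : ∀ v, v ∈ S ↔ (v ∈ P₂.support ∨ v ∈ P₁.support ∨ v ∈ P₃.support) := by
                intro v
                rw [hS' v]
                tauto
              exact nav1 h2 n2 (fun u hu v hv => (d12 v hv u hu).symm) d23 d13 hS2 hc2
                hfwd2 hbwd2 hcα hcβ hαS hβS hαβ
            · have hfwd3 : ∀ v ∈ S, G'.Adj c v → (P₃.toSubgraph.Adj c v ∨
                  P₂.toSubgraph.Adj c v ∨ P₁.toSubgraph.Adj c v ∨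
                  cornAdj a₃ a₂ a₁ b₃ b₂ b₁ c v) := by
                intro v hv hh
                rcases hfwd1 v hv hh with h' | h' | h' | h'
                · exact Or.inr (Or.inr (Or.inl h'))
                · exact Or.inr (Or.inl h')
                · exact Or.inl h'
                · exact Or.inr (Or.inr (Or.inr
                    ((cornAdj_perm13 a₁ a₂ a₃ b₁ b₂ b₃ c v).mp h')))
              have hbwd3 : ∀ u v, cornAdj a₃ a₂ a₁ b₃ b₂ b₁ u v → G'.Adj u v :=
                fun u v hh => hbwd0 u v ((cornAdj_perm13 a₁ a₂ a₃ b₁ b₂ b₃ u v).mpr hh)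
              have hS3 : ∀ v, v ∈ S ↔ (v ∈ P₃.support ∨ v ∈ P₂.support ∨ v ∈ P₁.support) := by
                intro v
                rw [hS' v]
                tauto
              exact nav1 h3 n3 (fun u hu v hv => (d23 v hv u hu).symm)
                (fun u hu v hv => (d13 v hv u hu).symm)
                (fun u hu v hv => (d12 v hv u hu).symm) hS3 hc3
                hfwd3 hbwd3 hcα hcβ hαS hβS hαβ
          obtain ⟨Q₀, hQ₀c, hQ₀s⟩ := exists_chordless W₀
          have hQ₀prop : ∀ v ∈ Q₀.support, v ∈ S ∧ v ≠ c ∧ (¬G'.Adj c v ∨ v = α ∨ v = β) :=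
            fun v hv => hW₀ v (hQ₀s v hv)
          obtain ⟨Qm, hQmlen, hQmsup, hQme⟩ := exists_lift (Subtype.val)
            (S := {v : {z : V // z ≠ ↑b} | v ≠ c})
            (fun u v hu hv h => adjG'_of u v hu hv h) Q₀
            (fun v hv => (hQ₀prop v hv).2.1)
          have hGaα : G.Adj ↑a α.1 := hαa
          have hGβb : G.Adj β.1 ↑b := hβb.symm
          set Q : G.Walk ↑a ↑b :=
            Walk.cons hGaα (Qm.append (Walk.cons hGβb Walk.nil)) with hQdef
          have hkey_a' : ∀ w ∈ Qm.support, G.Adj ↑a w → w = α.1 := by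
            intro w hw h
            rw [hQmsup] at hw
            obtain ⟨u₀, hu₀, rfl⟩ := List.mem_map.mp hw
            rcases (hQ₀prop u₀ hu₀).2.2 with hno' | h' | h'
            · exact absurd (adjca u₀ h) hno'
            · rw [h']
            · exact absurd (h' ▸ h) hβa
          have hkey_b' : ∀ w ∈ Qm.support, G.Adj ↑b w → w = β.1 := by
            intro w hw h
            rw [hQmsup] at hw
            obtain ⟨u₀, hu₀, rfl⟩ := List.mem_map.mp hw
            rcases (hQ₀prop u₀ hu₀).2.2 with hno' | h' | h'
            · exact absurd (adjcb u₀ h) hno'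
            · exact absurd (h' ▸ h) hαb
            · rw [h']
          have hQmnodup : Qm.support.Nodup := by
            rw [hQmsup]
            exact (hQ₀c.1.support_nodup).map Subtype.val_injective
          have hbQm : (↑b : V) ∉ Qm.support := by
            rw [hQmsup]
            intro hmem
            obtain ⟨u, hu, hval⟩ := List.mem_map.mp hmem
            exact u.2 hval
          have haQm : (↑a : V) ∉ Qm.support := by
            rw [hQmsup]
            intro hmem
            obtain ⟨u, hu, hval⟩ := List.mem_map.mp hmem
            exact (hW₀ u (hQ₀s u hu)).2.1 (Subtype.ext hval)
          have hQsupp : ∀ v ∈ Q.support, v = ↑a ∨ v ∈ Qm.support ∨ v = ↑b := by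
            intro v hv
            rw [hQdef, Walk.support_cons, List.mem_cons, Walk.mem_support_append_iff,
              Walk.support_cons, Walk.support_nil, List.mem_cons, List.mem_singleton] at hv
            rcases hv with rfl | hv | rfl | rfl
            · exact Or.inl rfl
            · exact Or.inr (Or.inl hv)
            · exact Or.inr (Or.inl Qm.end_mem_support)
            · exact Or.inr (Or.inr rfl)
          have hQedges : Q.edges = s(↑a, α.1) :: (Qm.edges ++ [s(β.1, ↑b)]) := by
            rw [hQdef, Walk.edges_cons, Walk.edges_append, Walk.edges_cons, Walk.edges_nil]
          have hQpath : Q.IsPath := by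
            rw [hQdef]
            refine Walk.IsPath.cons ?_ ?_
            · rw [Walk.isPath_def, Walk.support_append, Walk.support_cons, Walk.support_nil,
                List.tail_cons]
              refine List.Nodup.append hQmnodup (List.nodup_singleton _) ?_
              intro w hw hw'
              rw [List.mem_singleton] at hw'
              subst hw'
              exact hbQm hw
            · rw [Walk.mem_support_append_iff, Walk.support_cons, Walk.support_nil,
                List.mem_cons, List.mem_singleton]
              push_neg
              refine ⟨haQm, fun h => hcβ.ne' (Subtype.ext h.symm), hvne⟩
          have hQm_chord : ∀ u v : V, u ∈ Qm.support → v ∈ Qm.support → G.Adj u v →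
              s(u, v) ∈ Qm.edges := by
            intro u v hu hv h
            rw [hQmsup] at hu hv
            obtain ⟨u₀, hu₀, rfl⟩ := List.mem_map.mp hu
            obtain ⟨v₀, hv₀, rfl⟩ := List.mem_map.mp hv
            have hadj' : G'.Adj u₀ v₀ := adjG'_mk u₀ v₀ h
            have hedge := chordless_edges hQ₀c hu₀ hv₀ hadj'
            rw [hQme]
            exact List.mem_map.mpr ⟨s(u₀, v₀), hedge, Sym2.map_pair_eq _ _ _⟩
          have hQchord : IsChordless G Q := by
            refine ⟨hQpath, ?_⟩
            intro u v hu hv hadj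
            rw [walk_tsa_iff, hQedges]
            rcases hQsupp u hu with rfl | hu' | rfl <;> rcases hQsupp v hv with rfl | hv' | rfl
            · exact absurd hadj G.irrefl
            · rw [hkey_a' v hv' hadj]
              exact List.mem_cons_self
            · exact absurd hadj hGnadj
            · rw [hkey_a' u hu' hadj.symm]
              have hsw : s(α.1, (↑a : V)) = s((↑a : V), α.1) := Sym2.eq_swap
              rw [hsw]
              exact List.mem_cons_self
            · exact List.mem_cons_of_mem _ (List.mem_append_left _ (hQm_chord u v hu' hv' hadj))
            · rw [hkey_b' u hu' hadj.symm]
              exact List.mem_cons_of_mem _ (List.mem_append_right _ (List.mem_singleton_self _))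
            · exact absurd hadj.symm hGnadj
            · rw [hkey_b' v hv' hadj]
              have hsw : s((↑b : V), β.1) = s(β.1, (↑b : V)) := Sym2.eq_swap
              rw [hsw]
              exact List.mem_cons_of_mem _ (List.mem_append_right _ (List.mem_singleton_self _))
            · exact absurd hadj G.irrefl
          have hTfree : ∀ v ∈ Q.support, v ∉ T := by
            intro v hv hvT
            have hav : G.Adj ↑a v := haC.2 v hvT
            have hbv : G.Adj ↑b v := hbC.2 v hvT
            rcases hQsupp v hv with rfl | hv' | rfl
            · exact haT hvT
            · exact hαb ((hkey_a' v hv' hav) ▸ hbv)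
            · exact hbT hvT
          exact F2 Q hQchord hTfree
    · refine hG.2.2 ⟨Subtype.val '' S, prism_map (Subtype.val_injective.injOn) ?_ hpr⟩
      intro u hu v hv
      exact ⟨fun h => adjG'_of u v (fun hh => hcS (hh ▸ hu)) (fun hh => hcS (hh ▸ hv)) h,
        fun h => adjG'_mk u v h⟩
end
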